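/- arXiv:1209.6619 — 11 statements merged into one kernel-verified Lean document; each statement's English description precedes it below -/
import Mathlib

section
/- Set λ(i) = −1 and μ(j) = 1 for all i,j ∈ ℤ, so that condition (iii) becomes the octahedron recurrence T(i,j,k+1)·T(i,j,k−1) = T(i,j+1,k)·T(i,j−1,k) − T(i+1,j,k)·T(i−1,j,k). If T is a solution of the inhomogeneous T-system for (A, λ, μ) up to level n, then T(0,0,n) = det A. -/
open Matrix Equiv

namespace TSysAux

variable {F : Type*} [Field F]

/-- `k×k` minor of the doubly-indexed array `B` with top-left corner `(R, C)`. -/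
def dmat (B : ℤ → ℤ → F) (R C : ℤ) (k : ℕ) : Matrix (Fin k) (Fin k) F :=
  Matrix.of fun p q => B (R + (p : ℤ)) (C + (q : ℤ))

def mnr (B : ℤ → ℤ → F) (R C : ℤ) (k : ℕ) : F := (dmat B R C k).det

def eqF (m : ℕ) : Fin 1 ⊕ Fin m ≃ Fin (m + 1) :=
  finSumFinEquiv.trans (finCongr (Nat.add_comm 1 m))

def eqL (m : ℕ) : Fin 1 ⊕ Fin m ≃ Fin (m + 1) :=
  (Equiv.sumComm _ _).trans finSumFinEquiv

@[simp] lemma eqF_inl (m : ℕ) (x : Fin 1) : ((eqF m (Sum.inl x) : Fin (m+1)) : ℕ) = 0 := by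
  simp [eqF]

@[simp] lemma eqF_inr (m : ℕ) (p : Fin m) : ((eqF m (Sum.inr p) : Fin (m+1)) : ℕ) = p + 1 := by
  simp [eqF]

@[simp] lemma eqL_inl (m : ℕ) (x : Fin 1) : ((eqL m (Sum.inl x) : Fin (m+1)) : ℕ) = m := by
  simp [eqL]

@[simp] lemma eqL_inr (m : ℕ) (p : Fin m) : ((eqL m (Sum.inr p) : Fin (m+1)) : ℕ) = p := by
  simp [eqL]

def eqE (m : ℕ) : (Fin 1 ⊕ Fin 1) ⊕ Fin m ≃ Fin (m + 2) :=
  (Equiv.sumAssoc _ _ _).trans ((Equiv.sumCongr (Equiv.refl _) (eqL m)).trans (eqF (m+1)))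

@[simp] lemma eqE_inl_inl (m : ℕ) (x : Fin 1) :
    ((eqE m (Sum.inl (Sum.inl x)) : Fin (m+2)) : ℕ) = 0 := by
  simp [eqE]

@[simp] lemma eqE_inl_inr (m : ℕ) (x : Fin 1) :
    ((eqE m (Sum.inl (Sum.inr x)) : Fin (m+2)) : ℕ) = m + 1 := by
  simp [eqE, eqF, eqL]

@[simp] lemma eqE_inr (m : ℕ) (p : Fin m) :
    ((eqE m (Sum.inr p) : Fin (m+2)) : ℕ) = p + 1 := by
  simp [eqE, eqF, eqL]

/-- picks the two "extreme" coordinates -/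
def pk (b : ℤ) (m : ℕ) : Fin 1 ⊕ Fin 1 → ℤ :=
  Sum.elim (fun _ => b) (fun _ => b + m + 1)

lemma det_sum11 (S : Matrix (Fin 1 ⊕ Fin 1) (Fin 1 ⊕ Fin 1) F) :
    S.det = S (Sum.inl 0) (Sum.inl 0) * S (Sum.inr 0) (Sum.inr 0)
      - S (Sum.inl 0) (Sum.inr 0) * S (Sum.inr 0) (Sum.inl 0) := by
  have h0 : (finSumFinEquiv.symm (0 : Fin 2) : Fin 1 ⊕ Fin 1) = Sum.inl 0 := by decide
  have h1 : (finSumFinEquiv.symm (1 : Fin 2) : Fin 1 ⊕ Fin 1) = Sum.inr 0 := by decide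
  rw [← det_submatrix_equiv_self (finSumFinEquiv.symm) S, Matrix.det_fin_two]
  simp [h0, h1]


lemma minor_det (B : ℤ → ℤ → F) (R C : ℤ) (m : ℕ) [Invertible (dmat B (R+1) (C+1) m)]
    (er ec : Fin 1 ⊕ Fin m ≃ Fin (m+1)) (R0 C0 rr cc : ℤ)
    (hr0 : ∀ p : Fin m, R0 + ((er (Sum.inr p) : Fin (m+1)) : ℤ) = R + 1 + (p : ℤ))
    (hrl : ∀ x : Fin 1, R0 + ((er (Sum.inl x) : Fin (m+1)) : ℤ) = rr)
    (hc0 : ∀ q : Fin m, C0 + ((ec (Sum.inr q) : Fin (m+1)) : ℤ) = C + 1 + (q : ℤ))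
    (hcl : ∀ y : Fin 1, C0 + ((ec (Sum.inl y) : Fin (m+1)) : ℤ) = cc) :
    ((dmat B R0 C0 (m+1)).submatrix er ec).det =
      (dmat B (R+1) (C+1) m).det *
        (B rr cc - ∑ q : Fin m, (∑ p : Fin m, B rr (C + 1 + (p : ℤ)) * ⅟(dmat B (R+1) (C+1) m) p q) *
          B (R + 1 + (q : ℤ)) cc) := by
  have hdec : (dmat B R0 C0 (m+1)).submatrix er ec = Matrix.fromBlocks
      (Matrix.of fun (_ : Fin 1) (_ : Fin 1) => B rr cc)
      (Matrix.of fun (_ : Fin 1) (q : Fin m) => B rr (C + 1 + (q : ℤ)))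
      (Matrix.of fun (p : Fin m) (_ : Fin 1) => B (R + 1 + (p : ℤ)) cc)
      (dmat B (R+1) (C+1) m) := by
    ext i j
    rcases i with x | p <;> rcases j with y | q <;>
      · simp only [Matrix.submatrix_apply, dmat, Matrix.of_apply, Matrix.fromBlocks,
          Sum.elim_inl, Sum.elim_inr]
        congr 1 <;> first | apply hrl | apply hr0 | apply hcl | apply hc0
  rw [hdec, Matrix.det_fromBlocks₂₂, Matrix.det_fin_one]
  simp [Matrix.sub_apply, Matrix.mul_apply]

/-- Desnanot–Jacobi / Dodgson condensation, assuming the interior minor is nonzero. -/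
lemma dodgson (B : ℤ → ℤ → F) (R C : ℤ) (m : ℕ) (hQ : mnr B (R+1) (C+1) m ≠ 0) :
    mnr B R C (m+2) * mnr B (R+1) (C+1) m =
      mnr B (R+1) (C+1) (m+1) * mnr B R C (m+1)
        - mnr B R (C+1) (m+1) * mnr B (R+1) C (m+1) := by
  classical
  set Q : Matrix (Fin m) (Fin m) F := dmat B (R+1) (C+1) m with hQdef
  haveI : Invertible Q := Q.invertibleOfIsUnitDet (isUnit_iff_ne_zero.2 hQ)
  -- blocks
  set BB : Matrix (Fin 1 ⊕ Fin 1) (Fin m) F :=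
    Matrix.of (fun x q => B (pk R m x) (C + 1 + (q : ℤ))) with hBB
  set CC : Matrix (Fin m) (Fin 1 ⊕ Fin 1) F :=
    Matrix.of (fun p y => B (R + 1 + (p : ℤ)) (pk C m y)) with hCC
  set PP : Matrix (Fin 1 ⊕ Fin 1) (Fin 1 ⊕ Fin 1) F :=
    Matrix.of (fun x y => B (pk R m x) (pk C m y)) with hPP
  set S : Matrix (Fin 1 ⊕ Fin 1) (Fin 1 ⊕ Fin 1) F := PP - BB * ⅟Q * CC with hS
  -- big determinant
  have hbig : mnr B R C (m+2) = Q.det * S.det := by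
    have hdec : (dmat B R C (m+2)).submatrix (eqE m) (eqE m) =
        Matrix.fromBlocks PP BB CC Q := by
      ext i j
      rcases i with (x | x) | p <;> rcases j with (y | y) | q <;>
        · simp only [Matrix.submatrix_apply, dmat, Matrix.fromBlocks, Matrix.of_apply,
            Sum.elim_inl, Sum.elim_inr, pk]
          congr 1 <;> push_cast [eqE_inl_inl, eqE_inl_inr, eqE_inr, pk, Sum.elim_inl, Sum.elim_inr] <;> ring
    calc mnr B R C (m+2) = ((dmat B R C (m+2)).submatrix (eqE m) (eqE m)).det := by
          rw [det_submatrix_equiv_self]; rfl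
      _ = Q.det * S.det := by rw [hdec, Matrix.det_fromBlocks₂₂]
  -- Schur entries of S
  have hSxy : ∀ x y : Fin 1 ⊕ Fin 1, S x y =
      B (pk R m x) (pk C m y) - ∑ q : Fin m, (∑ p : Fin m, B (pk R m x) (C + 1 + (p : ℤ)) * ⅟Q p q) *
        B (R + 1 + (q : ℤ)) (pk C m y) := by
    intro x y
    simp [hS, hPP, hBB, hCC, Matrix.sub_apply, Matrix.mul_apply, Finset.sum_mul]
  have h00 : mnr B R C (m+1) = Q.det * S (Sum.inl 0) (Sum.inl 0) := by
    rw [hSxy]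
    show ((dmat B R C (m+1))).det = _
    rw [← det_submatrix_equiv_self (eqF m) (dmat B R C (m+1))]
    exact minor_det B R C m (eqF m) (eqF m) R C (pk R m (Sum.inl 0)) (pk C m (Sum.inl 0))
      (fun p => by push_cast [eqF_inr]; ring) (fun x => by push_cast [eqF_inl, pk, Sum.elim_inl, Sum.elim_inr]; ring)
      (fun q => by push_cast [eqF_inr]; ring) (fun y => by push_cast [eqF_inl, pk, Sum.elim_inl, Sum.elim_inr]; ring)
  have h11 : mnr B (R+1) (C+1) (m+1) = Q.det * S (Sum.inr 0) (Sum.inr 0) := by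
    rw [hSxy]
    show ((dmat B (R+1) (C+1) (m+1))).det = _
    rw [← det_submatrix_equiv_self (eqL m) (dmat B (R+1) (C+1) (m+1))]
    exact minor_det B R C m (eqL m) (eqL m) (R+1) (C+1) (pk R m (Sum.inr 0)) (pk C m (Sum.inr 0))
      (fun p => by push_cast [eqL_inr]; ring) (fun x => by push_cast [eqL_inl, pk, Sum.elim_inl, Sum.elim_inr]; ring)
      (fun q => by push_cast [eqL_inr]; ring) (fun y => by push_cast [eqL_inl, pk, Sum.elim_inl, Sum.elim_inr]; ring)
  set σ : Equiv.Perm (Fin 1 ⊕ Fin m) := (eqL m).trans (eqF m).symm with hσ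
  have h01 : ((Equiv.Perm.sign σ : ℤ) : F) * mnr B R (C+1) (m+1) =
      Q.det * S (Sum.inl 0) (Sum.inr 0) := by
    have hsub : (dmat B R (C+1) (m+1)).submatrix (eqF m) (eqL m) =
        ((dmat B R (C+1) (m+1)).submatrix (eqF m) (eqF m)).submatrix id σ := by
      ext i j
      simp [hσ, Matrix.submatrix_apply]
    have hd : ((dmat B R (C+1) (m+1)).submatrix (eqF m) (eqL m)).det =
        ((Equiv.Perm.sign σ : ℤ) : F) * mnr B R (C+1) (m+1) := by
      rw [hsub, det_permute', det_submatrix_equiv_self]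
      norm_cast
    rw [← hd, hSxy]
    exact minor_det B R C m (eqF m) (eqL m) R (C+1) (pk R m (Sum.inl 0)) (pk C m (Sum.inr 0))
      (fun p => by push_cast [eqF_inr]; ring) (fun x => by push_cast [eqF_inl, pk, Sum.elim_inl, Sum.elim_inr]; ring)
      (fun q => by push_cast [eqL_inr]; ring) (fun y => by push_cast [eqL_inl, pk, Sum.elim_inl, Sum.elim_inr]; ring)
  have h10 : ((Equiv.Perm.sign σ : ℤ) : F) * mnr B (R+1) C (m+1) =
      Q.det * S (Sum.inr 0) (Sum.inl 0) := by
    have hσ' : σ⁻¹ = (eqF m).trans (eqL m).symm := by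
      rw [hσ]; rfl
    have hsub : (dmat B (R+1) C (m+1)).submatrix (eqL m) (eqF m) =
        ((dmat B (R+1) C (m+1)).submatrix (eqL m) (eqL m)).submatrix id (⇑(σ⁻¹)) := by
      ext i j
      simp [hσ', Matrix.submatrix_apply]
    have hd : ((dmat B (R+1) C (m+1)).submatrix (eqL m) (eqF m)).det =
        ((Equiv.Perm.sign σ : ℤ) : F) * mnr B (R+1) C (m+1) := by
      rw [hsub, det_permute', det_submatrix_equiv_self, Equiv.Perm.sign_inv]
      norm_cast
    rw [← hd, hSxy]
    exact minor_det B R C m (eqL m) (eqF m) (R+1) C (pk R m (Sum.inr 0)) (pk C m (Sum.inl 0))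
      (fun p => by push_cast [eqL_inr]; ring) (fun x => by push_cast [eqL_inl, pk, Sum.elim_inl, Sum.elim_inr]; ring)
      (fun q => by push_cast [eqF_inr]; ring) (fun y => by push_cast [eqF_inl, pk, Sum.elim_inl, Sum.elim_inr]; ring)
  have hsgn : ((Equiv.Perm.sign σ : ℤ) : F) * ((Equiv.Perm.sign σ : ℤ) : F) = 1 := by
    rcases Int.units_eq_one_or (Equiv.Perm.sign σ) with h | h <;> rw [h] <;> norm_num
  have hQQ : mnr B (R+1) (C+1) m = Q.det := rfl
  rw [hbig, det_sum11, h00, h11, hQQ]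
  linear_combination h01 * (((Equiv.Perm.sign σ : ℤ) : F) * mnr B (R+1) C (m+1)) +
    h10 * (Q.det * S (Sum.inl 0) (Sum.inr 0)) -
    (mnr B R (C+1) (m+1) * mnr B (R+1) C (m+1)) * hsgn

lemma abs_bound (R C k n : ℤ) (h1 : 0 ≤ R) (h2 : R + k ≤ n) (h3 : 0 ≤ C) (h4 : C + k ≤ n)
    (hk : 0 ≤ k) : |C - R| + |R + C + k - n| + k ≤ n := by
  rcases abs_cases (C - R) with ⟨e1, _⟩ | ⟨e1, _⟩ <;>
    rcases abs_cases (R + C + k - n) with ⟨e2, _⟩ | ⟨e2, _⟩ <;> omega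

/-- extension of a finite matrix to a doubly-indexed array on `ℤ`. -/
def extA {F : Type*} [Field F] (n : ℕ) (A : Matrix (Fin n) (Fin n) F) : ℤ → ℤ → F :=
  fun r c => if h : 0 ≤ r ∧ r < n ∧ 0 ≤ c ∧ c < n
    then A ⟨r.toNat, by omega⟩ ⟨c.toNat, by omega⟩ else 0

lemma extA_eq {F : Type*} [Field F] (n : ℕ) (A : Matrix (Fin n) (Fin n) F) (r c : ℤ)
    (h1 : 0 ≤ r) (h2 : r < n) (h3 : 0 ≤ c) (h4 : c < n) :
    extA n A r c = A ⟨r.toNat, by omega⟩ ⟨c.toNat, by omega⟩ := by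
  rw [extA, dif_pos ⟨h1, h2, h3, h4⟩]

end TSysAux




/-- `T : ℤ×ℤ×ℕ → F` is a solution of the inhomogeneous T-system for `(A, λ, μ)`
up to level `n`. -/
def IsTSystemSolution {F : Type*} [Field F] (n : ℕ) (A : Matrix (Fin n) (Fin n) F)
    (lam mu : ℤ → F) (T : ℤ → ℤ → ℕ → F) : Prop :=
  (∀ i j : ℤ, (i + j) % 2 = (n : ℤ) % 2 → |i| + |j| ≤ (n : ℤ) → T i j 0 = 1) ∧
  (∀ i j : ℤ, ∀ r c : Fin n, (i + j) % 2 = ((n : ℤ) + 1) % 2 → |i| + |j| ≤ (n : ℤ) - 1 →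
      2 * ((r : ℤ) + 1) = j - i + n + 1 → 2 * ((c : ℤ) + 1) = i + j + n + 1 →
      T i j 1 = A r c) ∧
  (∀ i j : ℤ, ∀ k : ℕ, 1 ≤ k →
      (i + j + (k : ℤ)) % 2 = ((n : ℤ) + 1) % 2 → |i| + |j| + (k : ℤ) + 1 ≤ (n : ℤ) →
      T i j (k + 1) * T i j (k - 1) =
        mu j * T i (j + 1) k * T i (j - 1) k + lam i * T (i + 1) j k * T (i - 1) j k) ∧
  (∀ i j : ℤ, ∀ k : ℕ, (i + j + (k : ℤ)) % 2 = (n : ℤ) % 2 →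
      |i| + |j| + (k : ℤ) ≤ (n : ℤ) - 1 → T i j k ≠ 0)

/-- With `λ ≡ −1` and `μ ≡ 1` the inhomogeneous T-system becomes the octahedron
recurrence, and `T(0,0,n)` is the ordinary determinant of `A`. -/
theorem tsystem_octahedron_gives_determinant
    {F : Type*} [Field F] (n : ℕ) (hn : 1 ≤ n)
    (A : Matrix (Fin n) (Fin n) F) (T : ℤ → ℤ → ℕ → F)
    (hT : IsTSystemSolution n A (fun _ => (-1 : F)) (fun _ => (1 : F)) T) :
    T 0 0 n = A.det := by
  classical
  obtain ⟨hT0, hT1, hTrec, hTnz⟩ := hT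
  set B : ℤ → ℤ → F := TSysAux.extA n A with hBdef
  have key : ∀ k : ℕ, ∀ R C : ℤ, 0 ≤ R → R + k ≤ n → 0 ≤ C → C + k ≤ n →
      T (C - R) (R + C + k - n) k = TSysAux.mnr B R C k := by
    intro k
    induction k using Nat.strong_induction_on with
    | _ k ih =>
      rcases k with _ | _ | m
      · -- k = 0
        intro R C h1 h2 h3 h4
        have habs := TSysAux.abs_bound R C 0 n h1 (by push_cast at h2 ⊢; omega) h3
          (by push_cast at h4 ⊢; omega) le_rfl
        rw [hT0 (C - R) (R + C + (0 : ℕ) - n) (by push_cast; omega) (by push_cast; omega)]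
        exact (Matrix.det_fin_zero).symm
      · -- k = 1
        intro R C h1 h2 h3 h4
        push_cast at h2 h4
        have habs := TSysAux.abs_bound R C 1 n h1 h2 h3 h4 zero_le_one
        have hrn : R.toNat < n := by omega
        have hcn : C.toNat < n := by omega
        rw [hT1 (C - R) (R + C + (1 : ℕ) - n) ⟨R.toNat, hrn⟩ ⟨C.toNat, hcn⟩
          (by push_cast; omega) (by push_cast; omega) (by push_cast; omega)
          (by push_cast; omega)]
        have : TSysAux.mnr B R C 1 = B R C := by
          rw [TSysAux.mnr, Matrix.det_fin_one]
          simp [TSysAux.dmat]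
        rw [this, hBdef, TSysAux.extA_eq n A R C h1 (by omega) h3 (by omega)]
      · -- k = m + 2
        intro R C h1 h2 h3 h4
        push_cast at h2 h4 ⊢
        have habs := TSysAux.abs_bound R C ((m : ℤ) + 2) n h1 (by omega) h3 (by omega)
          (by omega)
        have hrec := hTrec (C - R) (R + C + ((m : ℤ) + 2) - n) (m + 1) (by omega)
          (by push_cast; omega) (by push_cast; omega)
        simp only [Nat.add_sub_cancel, one_mul, neg_one_mul] at hrec
        -- rewrite the five T-values via induction hypothesis
        have e_mid : T (C - R) (R + C + ((m : ℤ) + 2) - n) m = TSysAux.mnr B (R+1) (C+1) m := by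
          have h := ih m (by omega) (R+1) (C+1) (by omega) (by push_cast; omega)
            (by omega) (by push_cast; omega)
          rw [show C - R = (C+1) - (R+1) by ring,
            show R + C + ((m : ℤ) + 2) - n = (R+1) + (C+1) + (m : ℤ) - n by ring]
          exact h
        have e1 : T (C - R) (R + C + ((m : ℤ) + 2) - n + 1) (m + 1)
            = TSysAux.mnr B (R+1) (C+1) (m+1) := by
          have h := ih (m+1) (by omega) (R+1) (C+1) (by omega) (by push_cast; omega)
            (by omega) (by push_cast; omega)
          push_cast at h
          rw [show C - R = (C+1) - (R+1) by ring,
            show R + C + ((m : ℤ) + 2) - n + 1 = (R+1) + (C+1) + ((m : ℤ) + 1) - n by ring]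
          exact h
        have e2 : T (C - R) (R + C + ((m : ℤ) + 2) - n - 1) (m + 1)
            = TSysAux.mnr B R C (m+1) := by
          have h := ih (m+1) (by omega) R C h1 (by push_cast; omega) h3 (by push_cast; omega)
          push_cast at h
          rw [show R + C + ((m : ℤ) + 2) - n - 1 = R + C + ((m : ℤ) + 1) - n by ring]
          exact h
        have e3 : T (C - R + 1) (R + C + ((m : ℤ) + 2) - n) (m + 1)
            = TSysAux.mnr B R (C+1) (m+1) := by
          have h := ih (m+1) (by omega) R (C+1) h1 (by push_cast; omega)
            (by omega) (by push_cast; omega)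
          push_cast at h
          rw [show C - R + 1 = (C+1) - R by ring,
            show R + C + ((m : ℤ) + 2) - n = R + (C+1) + ((m : ℤ) + 1) - n by ring]
          exact h
        have e4 : T (C - R - 1) (R + C + ((m : ℤ) + 2) - n) (m + 1)
            = TSysAux.mnr B (R+1) C (m+1) := by
          have h := ih (m+1) (by omega) (R+1) C (by omega) (by push_cast; omega)
            h3 (by push_cast; omega)
          push_cast at h
          rw [show C - R - 1 = C - (R+1) by ring,
            show R + C + ((m : ℤ) + 2) - n = (R+1) + C + ((m : ℤ) + 1) - n by ring]
          exact h
        have hnz : TSysAux.mnr B (R+1) (C+1) m ≠ 0 := by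
          rw [← e_mid]
          exact hTnz (C - R) (R + C + ((m : ℤ) + 2) - n) m (by push_cast; omega)
            (by push_cast; omega)
        have hdj := TSysAux.dodgson B R C m hnz
        rw [e_mid, e1, e2, e3, e4] at hrec
        have goal' : T (C - R) (R + C + ((m : ℤ) + 2) - n) (m + 2) * TSysAux.mnr B (R+1) (C+1) m
            = TSysAux.mnr B R C (m+2) * TSysAux.mnr B (R+1) (C+1) m := by
          rw [hrec, hdj]; ring
        exact mul_right_cancel₀ hnz goal'
  have hkey := key n 0 0 le_rfl (by simp) le_rfl (by simp)
  simp only [sub_zero, zero_sub, add_zero, zero_add, sub_self] at hkey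
  rw [hkey]
  have : TSysAux.dmat B 0 0 n = A := by
    ext p q
    rw [TSysAux.dmat, hBdef]
    simp only [Matrix.of_apply, zero_add]
    rw [TSysAux.extA_eq n A p q (by positivity) (by exact_mod_cast p.is_lt)
      (by positivity) (by exact_mod_cast q.is_lt)]
    congr 1 <;> exact Fin.ext (by simp)
  rw [TSysAux.mnr, this]
end

section
/- Let λ₀ ∈ F, let x_1, …, x_n ∈ F be nonzero, set a_{i,j} = x_i^{j−1} (so A is the Vandermonde matrix of x_1,…,x_n), and set λ(a) = λ₀ and μ(a) = 1 for all a ∈ ℤ. If T is a solution of the inhomogeneous T-system for (A, λ, μ) up to level n, then T(0,0,n) = ∏_{1≤i<j≤n} (x_j + λ₀·x_i). -/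
open Finset

section AuxTSys
variable {F : Type*} [CommRing F]

/-- auxiliary double product -/
noncomputable def Vp (y : ℤ → F) (l : F) (u v : ℤ) : F :=
  ∏ q ∈ Finset.Icc u v, ∏ p ∈ Finset.Icc u (q - 1), (y q + l * y p)

lemma Icc_insert_bot {u v : ℤ} (h : u ≤ v) :
    Finset.Icc u v = insert u (Finset.Icc (u + 1) v) := by
  ext s; simp only [Finset.mem_Icc, Finset.mem_insert]; omega

lemma Icc_insert_top {u v : ℤ} (h : u ≤ v) :
    Finset.Icc u v = insert v (Finset.Icc u (v - 1)) := by
  ext s; simp only [Finset.mem_Icc, Finset.mem_insert]; omega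

lemma prod_Icc_bot (f : ℤ → F) {u v : ℤ} (h : u ≤ v) :
    ∏ s ∈ Finset.Icc u v, f s = f u * ∏ s ∈ Finset.Icc (u + 1) v, f s := by
  rw [Icc_insert_bot h, Finset.prod_insert (by simp)]

lemma prod_Icc_top (f : ℤ → F) {u v : ℤ} (h : u ≤ v) :
    ∏ s ∈ Finset.Icc u v, f s = (∏ s ∈ Finset.Icc u (v - 1), f s) * f v := by
  rw [Icc_insert_top h, Finset.prod_insert (by simp), mul_comm]

lemma Vp_bot (y : ℤ → F) (l : F) {u v : ℤ} (h : u ≤ v) :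
    Vp y l u v
      = (∏ q ∈ Finset.Icc (u + 1) v, (y q + l * y u)) * Vp y l (u + 1) v := by
  unfold Vp
  rw [prod_Icc_bot _ h]
  rw [show Finset.Icc u (u - 1) = ∅ from Finset.Icc_eq_empty (by omega)]
  rw [Finset.prod_empty, one_mul, ← Finset.prod_mul_distrib]
  apply Finset.prod_congr rfl
  intro q hq
  simp only [Finset.mem_Icc] at hq
  rw [prod_Icc_bot _ (by omega : u ≤ q - 1)]

lemma key (y : ℤ → F) (l : F) (a k : ℤ) (hk : 1 ≤ k) (c : ℕ) :
    (∏ s ∈ Finset.Icc a (a + k), y s) ^ c * Vp y l a (a + k) *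
      ((∏ s ∈ Finset.Icc (a + 1) (a + k - 1), y s) ^ (c + 1) * Vp y l (a + 1) (a + k - 1)) =
    (∏ s ∈ Finset.Icc (a + 1) (a + k), y s) ^ (c + 1) * Vp y l (a + 1) (a + k) *
      ((∏ s ∈ Finset.Icc a (a + k - 1), y s) ^ c * Vp y l a (a + k - 1)) +
    l * ((∏ s ∈ Finset.Icc a (a + k - 1), y s) ^ (c + 1) * Vp y l a (a + k - 1)) *
      ((∏ s ∈ Finset.Icc (a + 1) (a + k), y s) ^ c * Vp y l (a + 1) (a + k)) := by
  have h1 : a ≤ a + k := by omega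
  have h2 : a + 1 ≤ a + k := by omega
  have h3 : a ≤ a + k - 1 := by omega
  have e1 : (∏ s ∈ Finset.Icc a (a + k), y s)
      = y a * ((∏ s ∈ Finset.Icc (a + 1) (a + k - 1), y s) * y (a + k)) := by
    rw [prod_Icc_bot _ h1, prod_Icc_top _ h2]
  have e2 : (∏ s ∈ Finset.Icc (a + 1) (a + k), y s)
      = (∏ s ∈ Finset.Icc (a + 1) (a + k - 1), y s) * y (a + k) := prod_Icc_top _ h2
  have e3 : (∏ s ∈ Finset.Icc a (a + k - 1), y s)
      = y a * ∏ s ∈ Finset.Icc (a + 1) (a + k - 1), y s := prod_Icc_bot _ h3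
  have e4 : Vp y l a (a + k)
      = (∏ q ∈ Finset.Icc (a + 1) (a + k), (y q + l * y a)) * Vp y l (a + 1) (a + k) :=
    Vp_bot _ _ h1
  have e5 : Vp y l a (a + k - 1)
      = (∏ q ∈ Finset.Icc (a + 1) (a + k - 1), (y q + l * y a)) * Vp y l (a + 1) (a + k - 1) :=
    Vp_bot _ _ h3
  have e6 : (∏ q ∈ Finset.Icc (a + 1) (a + k), (y q + l * y a))
      = (∏ q ∈ Finset.Icc (a + 1) (a + k - 1), (y q + l * y a)) * (y (a + k) + l * y a) :=
    prod_Icc_top _ h2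
  rw [e1, e2, e3, e4, e5, e6]
  ring

lemma prod_Icc_one_cast (n : ℕ) (g : ℤ → F) :
    ∏ q ∈ Finset.Icc (1 : ℤ) (n : ℤ), g q = ∏ j ∈ Finset.range n, g ((j : ℤ) + 1) := by
  refine Finset.prod_bij' (fun q _ => (q - 1).toNat) (fun j _ => (j : ℤ) + 1) ?_ ?_ ?_ ?_ ?_
  · intro a ha; simp only [Finset.mem_Icc] at ha; simp only [Finset.mem_range]; omega
  · intro a ha; simp only [Finset.mem_range] at ha; simp only [Finset.mem_Icc]; omega
  · intro a ha; simp only [Finset.mem_Icc] at ha; omega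
  · intro a ha; simp only [Finset.mem_range] at ha; omega
  · intro a ha; simp only [Finset.mem_Icc] at ha; congr 1; omega

lemma Vp_one_cast (n : ℕ) (y : ℤ → F) (l : F) :
    Vp y l 1 (n : ℤ)
      = ∏ j ∈ Finset.range n, ∏ i ∈ Finset.range j, (y ((j : ℤ) + 1) + l * y ((i : ℤ) + 1)) := by
  unfold Vp
  rw [prod_Icc_one_cast]
  apply Finset.prod_congr rfl
  intro j _
  rw [show (j : ℤ) + 1 - 1 = (j : ℤ) by ring, prod_Icc_one_cast]

end AuxTSys

/-- The Lambda-determinant of the Vandermonde matrix. -/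
theorem lambda_determinant_vandermonde
    {F : Type*} [Field F] (n : ℕ) (hn : 1 ≤ n)
    (lam0 : F) (x : Fin n → F) (hx : ∀ i, x i ≠ 0)
    (T : ℤ → ℤ → ℕ → F)
    (hT : IsTSystemSolution n (Matrix.of fun i j : Fin n => x i ^ (j : ℕ))
      (fun _ => lam0) (fun _ => (1 : F)) T) :
    T 0 0 n = ∏ i : Fin n, ∏ j ∈ Finset.Ioi i, (x j + lam0 * x i) := by
  obtain ⟨h0, h1, hrec, hnz⟩ := hT
  set y : ℤ → F := fun m => if h : (m - 1).toNat < n then x ⟨(m - 1).toNat, h⟩ else 1 with hy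
  have hy1 : ∀ (m : ℤ) (hm : (m - 1).toNat < n), y m = x ⟨(m - 1).toNat, hm⟩ := by
    intro m hm; simp only [hy]; rw [dif_pos hm]
  have main : ∀ k : ℕ, ∀ i j a b c : ℤ,
      2 * a = j - i + (n : ℤ) + 2 - (k : ℤ) →
      b = a + (k : ℤ) - 1 →
      2 * (c + 1) = i + j + (n : ℤ) + 2 - (k : ℤ) →
      (i + j + (k : ℤ)) % 2 = (n : ℤ) % 2 →
      i.natAbs + j.natAbs + k ≤ n →
      T i j k = (∏ s ∈ Finset.Icc a b, y s) ^ c.toNat * Vp y lam0 a b := by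
    intro k
    induction k using Nat.strong_induction_on with
    | _ k IH =>
      rcases k with _ | _ | m
      · -- k = 0
        intro i j a b c ha hb hc hp hB
        subst hb
        have hempty : Finset.Icc a (a + ((0 : ℕ) : ℤ) - 1) = ∅ :=
          Finset.Icc_eq_empty (by push_cast; omega)
        rw [h0 i j (by omega) (by simp only [Int.abs_eq_natAbs]; omega)]
        simp [Vp, hempty]
      · -- k = 1
        intro i j a b c ha hb hc hp hB
        rw [show b = a from by omega]
        have h1a : 1 ≤ a := by omega
        have h2a : a ≤ (n : ℤ) := by omega
        have hc0 : 0 ≤ c := by omega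
        have hcn : c ≤ (n : ℤ) - 1 := by omega
        have hr : (a - 1).toNat < n := by omega
        have hcl : c.toNat < n := by omega
        rw [h1 i j ⟨(a - 1).toNat, hr⟩ ⟨c.toNat, hcl⟩ (by omega)
            (by simp only [Int.abs_eq_natAbs]; omega)
            (by simp only []; omega) (by simp only []; omega)]
        rw [Matrix.of_apply]
        have he : Finset.Icc a (a - 1) = ∅ := Finset.Icc_eq_empty (by omega)
        simp only [Vp, Finset.Icc_self, Finset.prod_singleton, he, Finset.prod_empty, mul_one]
        rw [hy1 a hr]
      · -- k = m + 2
        intro i j a b c ha hb hc hp hB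
        obtain rfl : b = a + ((m : ℤ) + 1) := by omega
        have hc0 : 0 ≤ c := by omega
        have hct : (c + 1).toNat = c.toNat + 1 := by omega
        have E1 := hrec i j (m + 1) (by omega) (by omega)
          (by simp only [Int.abs_eq_natAbs]; omega)
        rw [show m + 1 + 1 = m + 2 from rfl, show m + 1 - 1 = m from rfl] at E1
        simp only [one_mul] at E1
        have Hm := IH m (by omega) i j (a + 1) (a + ((m : ℤ) + 1) - 1) (c + 1)
          (by omega) (by omega) (by omega) (by omega) (by omega)
        have Hjp := IH (m + 1) (by omega) i (j + 1) (a + 1) (a + ((m : ℤ) + 1)) (c + 1)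
          (by omega) (by omega) (by omega) (by omega) (by omega)
        have Hjm := IH (m + 1) (by omega) i (j - 1) a (a + ((m : ℤ) + 1) - 1) c
          (by omega) (by omega) (by omega) (by omega) (by omega)
        have Hip := IH (m + 1) (by omega) (i + 1) j a (a + ((m : ℤ) + 1) - 1) (c + 1)
          (by omega) (by omega) (by omega) (by omega) (by omega)
        have Him := IH (m + 1) (by omega) (i - 1) j (a + 1) (a + ((m : ℤ) + 1)) c
          (by omega) (by omega) (by omega) (by omega) (by omega)
        rw [hct] at Hm Hjp Hip
        have hnz0 : T i j m ≠ 0 := hnz i j m (by omega)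
          (by simp only [Int.abs_eq_natAbs]; omega)
        rw [Hm, Hjp, Hjm, Hip, Him] at E1
        have E2 := key y lam0 a ((m : ℤ) + 1) (by omega) c.toNat
        have hSm : (∏ s ∈ Finset.Icc (a + 1) (a + ((m : ℤ) + 1) - 1), y s) ^ (c.toNat + 1) *
            Vp y lam0 (a + 1) (a + ((m : ℤ) + 1) - 1) ≠ 0 := by
          rw [← Hm]; exact hnz0
        refine mul_right_cancel₀ hSm ?_
        linear_combination E1 - E2
  have hmain := main n 0 0 1 (n : ℤ) 0 (by omega) (by omega) (by omega) (by omega) (by omega)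
  rw [hmain]
  rw [show ((0 : ℤ)).toNat = 0 from rfl, pow_zero, one_mul, Vp_one_cast]
  have swap : (∏ i : Fin n, ∏ j ∈ Finset.Ioi i, (x j + lam0 * x i))
      = ∏ j : Fin n, ∏ i ∈ Finset.Iio j, (x j + lam0 * x i) :=
    Finset.prod_comm' (by intro i j; simp [Finset.mem_Ioi, Finset.mem_Iio, and_comm])
  rw [swap, ← Fin.prod_univ_eq_prod_range
    (fun j => ∏ i ∈ Finset.range j, (y ((j : ℤ) + 1) + lam0 * y ((i : ℤ) + 1))) n]
  apply Finset.prod_congr rfl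
  intro j _
  have hxy : ∀ i : Fin n, y ((i : ℤ) + 1) = x i := by
    intro i
    have hm : (((i : ℤ) + 1) - 1).toNat < n := by omega
    rw [hy1 _ hm]
    congr 1
    ext
    simp only []
    omega
  refine Finset.prod_bij' (fun (i : ℕ) (hi : i ∈ Finset.range (j : ℕ)) =>
      (⟨i, by simp only [Finset.mem_range] at hi; omega⟩ : Fin n))
    (fun i _ => (i : ℕ)) ?_ ?_ ?_ ?_ ?_
  · intro i hi; simp only [Finset.mem_range] at hi; simp only [Finset.mem_Iio]
    exact Fin.mk_lt_of_lt_val hi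
  · intro i hi; simp only [Finset.mem_Iio] at hi; simp only [Finset.mem_range]
    exact hi
  · intro i hi; rfl
  · intro i hi; rfl
  · intro i hi
    rw [hxy j, hxy ⟨i, _⟩]
end

section
/- Let λ₀, μ₀ ∈ F, let x_1, …, x_n ∈ F be nonzero, set a_{i,j} = x_i^{j−1} (so A is the Vandermonde matrix of x_1,…,x_n), and set λ(a) = λ₀ and μ(a) = μ₀ for all a ∈ ℤ. If T is a solution of the inhomogeneous T-system for (A, λ, μ) up to level n, then T(0,0,n) = ∏_{1≤i<j≤n} (λ₀·x_i + μ₀·x_j). -/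
/-- Explicit solution: monomial part times `(L,M)`-deformed Vandermonde factor. -/
def tsysAux {F : Type*} [Field F] (y : ℕ → F) (L M : F) (ρ γ k : ℕ) : F :=
  (∏ s ∈ Finset.range k, y (ρ + s) ^ γ) *
    ∏ a ∈ Finset.range k, ∏ b ∈ Finset.range a, (L * y (ρ + b) + M * y (ρ + a))

lemma tsys_shift {F : Type*} [CommMonoid F] (g : ℕ → F) (ρ k : ℕ) :
    ∏ s ∈ Finset.range (k + 1), g (ρ + s) = g ρ * ∏ s ∈ Finset.range k, g (ρ + 1 + s) := by
  rw [Finset.prod_range_succ', mul_comm]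
  congr 1
  · exact Finset.prod_congr rfl fun s _ => by rw [show ρ + (s + 1) = ρ + 1 + s by omega]

lemma tsysAux_rec {F : Type*} [Field F] (y : ℕ → F) (L M : F) (ρ γ k : ℕ) :
    tsysAux y L M ρ γ (k + 2) * tsysAux y L M (ρ + 1) (γ + 1) k =
      M * tsysAux y L M (ρ + 1) (γ + 1) (k + 1) * tsysAux y L M ρ γ (k + 1) +
        L * tsysAux y L M ρ (γ + 1) (k + 1) * tsysAux y L M (ρ + 1) γ (k + 1) := by
  unfold tsysAux
  -- monomial decompositions
  have hm1 : ∀ e, ∏ s ∈ Finset.range (k + 2), y (ρ + s) ^ e =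
      y ρ ^ e * ((∏ s ∈ Finset.range k, y (ρ + 1 + s) ^ e) * y (ρ + 1 + k) ^ e) := by
    intro e
    rw [tsys_shift (fun t => y t ^ e), Finset.prod_range_succ]
  have hm2 : ∀ e, ∏ s ∈ Finset.range (k + 1), y (ρ + s) ^ e =
      y ρ ^ e * ∏ s ∈ Finset.range k, y (ρ + 1 + s) ^ e := by
    intro e; rw [tsys_shift (fun t => y t ^ e)]
  have hm3 : ∀ e, ∏ s ∈ Finset.range (k + 1), y (ρ + 1 + s) ^ e =
      (∏ s ∈ Finset.range k, y (ρ + 1 + s) ^ e) * y (ρ + 1 + k) ^ e := by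
    intro e; rw [Finset.prod_range_succ]
  -- pair-product decompositions
  have hP1 : ∏ a ∈ Finset.range (k + 2), ∏ b ∈ Finset.range a, (L * y (ρ + b) + M * y (ρ + a)) =
      (∏ a ∈ Finset.range (k + 1), ∏ b ∈ Finset.range a, (L * y (ρ + b) + M * y (ρ + a))) *
      ((L * y ρ + M * y (ρ + (k + 1))) *
        ∏ b ∈ Finset.range k, (L * y (ρ + 1 + b) + M * y (ρ + (k + 1)))) := by
    rw [Finset.prod_range_succ, tsys_shift (fun t => L * y t + M * y (ρ + (k + 1)))]
  have hP2 : ∏ a ∈ Finset.range (k + 1), ∏ b ∈ Finset.range a,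
        (L * y (ρ + 1 + b) + M * y (ρ + 1 + a)) =
      (∏ a ∈ Finset.range k, ∏ b ∈ Finset.range a, (L * y (ρ + 1 + b) + M * y (ρ + 1 + a))) *
        ∏ b ∈ Finset.range k, (L * y (ρ + 1 + b) + M * y (ρ + (k + 1))) := by
    rw [Finset.prod_range_succ, show ρ + 1 + k = ρ + (k + 1) by omega]
  rw [hm1, hm2, hm2, hm3, hm3, hP1, hP2]
  rw [show ρ + 1 + k = ρ + (k + 1) by omega]
  ring

lemma tsys_main {F : Type*} [Field F] (n : ℕ) (lam0 mu0 : F) (x : Fin n → F)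
    (T : ℤ → ℤ → ℕ → F)
    (hT : IsTSystemSolution n (Matrix.of fun i j : Fin n => x i ^ (j : ℕ))
      (fun _ => lam0) (fun _ => mu0) T) :
    ∀ k ρ γ : ℕ, ρ + k ≤ n → γ + k ≤ n →
      T ((γ : ℤ) - ρ) ((ρ : ℤ) + γ + k - n) k =
        tsysAux (fun t => if h : t < n then x ⟨t, h⟩ else 1) lam0 mu0 ρ γ k := by
  set y : ℕ → F := fun t => if h : t < n then x ⟨t, h⟩ else 1 with hy
  intro k
  induction k using Nat.strong_induction_on with
  | _ k IH =>
  rcases k with _ | (_ | k)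
  · -- k = 0
    intro ρ γ h1 h2
    rw [hT.1 _ _ (by omega) ?_]
    · simp [tsysAux]
    · rcases abs_cases ((γ : ℤ) - ρ) with ⟨e1, f1⟩ | ⟨e1, f1⟩ <;>
        rcases abs_cases ((ρ : ℤ) + γ + ((0 : ℕ) : ℤ) - n) with ⟨e2, f2⟩ | ⟨e2, f2⟩ <;> omega
  · -- k = 1
    intro ρ γ h1 h2
    have hr : ρ < n := by omega
    have hc : γ < n := by omega
    rw [hT.2.1 _ _ ⟨ρ, hr⟩ ⟨γ, hc⟩ (by omega) ?_ (by push_cast; ring) (by push_cast; ring)]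
    · simp [tsysAux, Matrix.of_apply, hy, hr]
    · rcases abs_cases ((γ : ℤ) - ρ) with ⟨e1, f1⟩ | ⟨e1, f1⟩ <;>
        rcases abs_cases ((ρ : ℤ) + γ + (((0 : ℕ) + 1 : ℕ) : ℤ) - n) with ⟨e2, f2⟩ | ⟨e2, f2⟩ <;>
        omega
  · -- k + 2
    intro ρ γ h1 h2
    have habs : |(γ : ℤ) - ρ| + |(ρ : ℤ) + γ + ((k : ℤ) + 2) - n| ≤ (n : ℤ) - ((k : ℤ) + 2) := by
      rcases abs_cases ((γ : ℤ) - ρ) with ⟨e1, f1⟩ | ⟨e1, f1⟩ <;>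
        rcases abs_cases ((ρ : ℤ) + γ + ((k : ℤ) + 2) - n) with ⟨e2, f2⟩ | ⟨e2, f2⟩ <;> omega
    have hrec := hT.2.2.1 ((γ : ℤ) - ρ) ((ρ : ℤ) + γ + ((k : ℤ) + 2) - n) (k + 1)
      (by omega) (by omega) (by push_cast at habs ⊢; omega)
    simp only [Nat.add_sub_cancel] at hrec
    have e1 : T ((γ : ℤ) - ρ) (((ρ : ℤ) + γ + ((k : ℤ) + 2) - n) + 1) (k + 1) =
        tsysAux y lam0 mu0 (ρ + 1) (γ + 1) (k + 1) := by
      have h := IH (k + 1) (by omega) (ρ + 1) (γ + 1) (by omega) (by omega)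
      rw [show ((γ + 1 : ℕ) : ℤ) - ((ρ + 1 : ℕ) : ℤ) = (γ : ℤ) - ρ by push_cast; ring,
        show ((ρ + 1 : ℕ) : ℤ) + ((γ + 1 : ℕ) : ℤ) + ((k + 1 : ℕ) : ℤ) - (n : ℤ) =
          ((ρ : ℤ) + γ + ((k : ℤ) + 2) - n) + 1 by push_cast; ring] at h
      exact h
    have e2 : T ((γ : ℤ) - ρ) (((ρ : ℤ) + γ + ((k : ℤ) + 2) - n) - 1) (k + 1) =
        tsysAux y lam0 mu0 ρ γ (k + 1) := by
      have h := IH (k + 1) (by omega) ρ γ (by omega) (by omega)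
      rw [show (ρ : ℤ) + (γ : ℤ) + ((k + 1 : ℕ) : ℤ) - (n : ℤ) =
          ((ρ : ℤ) + γ + ((k : ℤ) + 2) - n) - 1 by push_cast; ring] at h
      exact h
    have e3 : T (((γ : ℤ) - ρ) + 1) ((ρ : ℤ) + γ + ((k : ℤ) + 2) - n) (k + 1) =
        tsysAux y lam0 mu0 ρ (γ + 1) (k + 1) := by
      have h := IH (k + 1) (by omega) ρ (γ + 1) (by omega) (by omega)
      rw [show ((γ + 1 : ℕ) : ℤ) - (ρ : ℤ) = ((γ : ℤ) - ρ) + 1 by push_cast; ring,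
        show (ρ : ℤ) + ((γ + 1 : ℕ) : ℤ) + ((k + 1 : ℕ) : ℤ) - (n : ℤ) =
          (ρ : ℤ) + γ + ((k : ℤ) + 2) - n by push_cast; ring] at h
      exact h
    have e4 : T (((γ : ℤ) - ρ) - 1) ((ρ : ℤ) + γ + ((k : ℤ) + 2) - n) (k + 1) =
        tsysAux y lam0 mu0 (ρ + 1) γ (k + 1) := by
      have h := IH (k + 1) (by omega) (ρ + 1) γ (by omega) (by omega)
      rw [show (γ : ℤ) - ((ρ + 1 : ℕ) : ℤ) = ((γ : ℤ) - ρ) - 1 by push_cast; ring,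
        show ((ρ + 1 : ℕ) : ℤ) + (γ : ℤ) + ((k + 1 : ℕ) : ℤ) - (n : ℤ) =
          (ρ : ℤ) + γ + ((k : ℤ) + 2) - n by push_cast; ring] at h
      exact h
    have e5 : T ((γ : ℤ) - ρ) ((ρ : ℤ) + γ + ((k : ℤ) + 2) - n) k =
        tsysAux y lam0 mu0 (ρ + 1) (γ + 1) k := by
      have h := IH k (by omega) (ρ + 1) (γ + 1) (by omega) (by omega)
      rw [show ((γ + 1 : ℕ) : ℤ) - ((ρ + 1 : ℕ) : ℤ) = (γ : ℤ) - ρ by push_cast; ring,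
        show ((ρ + 1 : ℕ) : ℤ) + ((γ + 1 : ℕ) : ℤ) + ((k : ℕ) : ℤ) - (n : ℤ) =
          (ρ : ℤ) + γ + ((k : ℤ) + 2) - n by push_cast; ring] at h
      exact h
    have hne : T ((γ : ℤ) - ρ) ((ρ : ℤ) + γ + ((k : ℤ) + 2) - n) k ≠ 0 :=
      hT.2.2.2 _ _ k (by omega) (by omega)
    rw [e1, e2, e3, e4, e5] at hrec
    have key := tsysAux_rec y lam0 mu0 ρ γ k
    have hne' : tsysAux y lam0 mu0 (ρ + 1) (γ + 1) k ≠ 0 := e5 ▸ hne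
    have hfin := mul_right_cancel₀ hne' (hrec.trans key.symm)
    rw [show (ρ : ℤ) + (γ : ℤ) + ((k + 1 + 1 : ℕ) : ℤ) - (n : ℤ) =
      (ρ : ℤ) + γ + ((k : ℤ) + 2) - n by push_cast; ring]
    exact hfin

/-- The generalized `(λ₀,μ₀)`-determinant of the Vandermonde matrix. -/
theorem generalized_lambda_determinant_vandermonde
    {F : Type*} [Field F] (n : ℕ) (hn : 1 ≤ n)
    (lam0 mu0 : F) (x : Fin n → F) (hx : ∀ i, x i ≠ 0)
    (T : ℤ → ℤ → ℕ → F)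
    (hT : IsTSystemSolution n (Matrix.of fun i j : Fin n => x i ^ (j : ℕ))
      (fun _ => lam0) (fun _ => mu0) T) :
    T 0 0 n = ∏ i : Fin n, ∏ j ∈ Finset.Ioi i, (lam0 * x i + mu0 * x j) := by
  set y : ℕ → F := fun t => if h : t < n then x ⟨t, h⟩ else 1 with hy
  have h := tsys_main n lam0 mu0 x T hT n 0 0 (by omega) (by omega)
  rw [show ((0 : ℕ) : ℤ) - ((0 : ℕ) : ℤ) = 0 by norm_num,
    show ((0 : ℕ) : ℤ) + ((0 : ℕ) : ℤ) + (n : ℤ) - (n : ℤ) = 0 by ring] at h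
  rw [h]
  unfold tsysAux
  simp only [pow_zero, Finset.prod_const_one, one_mul, zero_add]
  rw [Finset.prod_comm' (s' := fun j : Fin n => Finset.Iio j) (t' := Finset.univ)
    (by simp [Finset.mem_Ioi, Finset.mem_Iio])]
  rw [← Fin.prod_univ_eq_prod_range
    (fun a => ∏ b ∈ Finset.range a, (lam0 * y b + mu0 * y a)) n]
  refine Finset.prod_congr rfl fun a _ => ?_
  refine Finset.prod_nbij' (fun b => if h : b < n then (⟨b, h⟩ : Fin n) else a)
    (fun i => (i : ℕ)) ?_ ?_ ?_ ?_ ?_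
  · intro b hb
    simp only [Finset.mem_range] at hb
    have hbn : b < n := lt_of_lt_of_le hb a.isLt.le
    simp [Finset.mem_Iio, dif_pos hbn, Fin.lt_def, hb]
  · intro i hi
    simp only [Finset.mem_Iio, Fin.lt_def] at hi
    simpa [Finset.mem_range] using hi
  · intro b hb
    simp only [Finset.mem_range] at hb
    have hbn : b < n := lt_of_lt_of_le hb a.isLt.le
    simp [dif_pos hbn]
  · intro i hi
    simp [i.isLt]
  · intro b hb
    simp only [Finset.mem_range] at hb
    have hbn : b < n := lt_of_lt_of_le hb a.isLt.le
    simp [hy, dif_pos hbn, a.isLt]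
end

section
/- (Quarter-turn symmetry of the inhomogeneous T-system.) Suppose T satisfies the inhomogeneous T-system recurrence with coefficients (λ, μ) on the domain of size n and T is nonvanishing. Define λ^σ(a) = μ(−a) and μ^σ(a) = λ(a) for all a ∈ ℤ. Suppose T^σ satisfies the inhomogeneous T-system recurrence with coefficients (λ^σ, μ^σ) on the domain of size n, and that T^σ(i,j,m) = T(j,−i,m) for m ∈ {0,1} and all i,j ∈ ℤ with i+j+m ≡ n (mod 2) and |i|+|j|+m ≤ n. Then T^σ(i,j,k) = T(j,−i,k) for all i,j ∈ ℤ and k ≥ 0 with i+j+k ≡ n (mod 2) and |i|+|j|+k ≤ n. -/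
/-- `T` satisfies the inhomogeneous T-system recurrence with coefficients `(λ, μ)`
on the domain of size `n`. -/
def SatisfiesTRecurrence {F : Type*} [Field F] (n : ℕ) (lam mu : ℤ → F)
    (T : ℤ → ℤ → ℕ → F) : Prop :=
  ∀ i j : ℤ, ∀ k : ℕ, 1 ≤ k →
    (i + j + (k : ℤ)) % 2 = ((n : ℤ) + 1) % 2 → |i| + |j| + (k : ℤ) + 1 ≤ (n : ℤ) →
    T i j (k + 1) * T i j (k - 1) =
      mu j * T i (j + 1) k * T i (j - 1) k + lam i * T (i + 1) j k * T (i - 1) j k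

/-- `T` is nonvanishing on the interior of the domain of size `n`. -/
def NonVanishing {F : Type*} [Field F] (n : ℕ) (T : ℤ → ℤ → ℕ → F) : Prop :=
  ∀ i j : ℤ, ∀ k : ℕ, (i + j + (k : ℤ)) % 2 = (n : ℤ) % 2 →
    |i| + |j| + (k : ℤ) ≤ (n : ℤ) - 1 → T i j k ≠ 0

/-- Quarter-turn symmetry of the inhomogeneous T-system. -/
theorem tsystem_quarter_turn_symmetry
    {F : Type*} [Field F] (n : ℕ) (hn : 1 ≤ n) (lam mu : ℤ → F)
    (T Tsig : ℤ → ℤ → ℕ → F)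
    (hT : SatisfiesTRecurrence n lam mu T) (hnv : NonVanishing n T)
    (hTsig : SatisfiesTRecurrence n (fun a => mu (-a)) (fun a => lam a) Tsig)
    (hinit : ∀ i j : ℤ, ∀ m : ℕ, m ≤ 1 →
      (i + j + (m : ℤ)) % 2 = (n : ℤ) % 2 → |i| + |j| + (m : ℤ) ≤ (n : ℤ) →
      Tsig i j m = T j (-i) m) :
    ∀ i j : ℤ, ∀ k : ℕ, (i + j + (k : ℤ)) % 2 = (n : ℤ) % 2 →
      |i| + |j| + (k : ℤ) ≤ (n : ℤ) → Tsig i j k = T j (-i) k := by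

  have habs : ∀ a : ℤ, |a + 1| ≤ |a| + 1 ∧ |a - 1| ≤ |a| + 1 := by
    intro a
    rcases abs_cases a with ⟨h1, h2⟩ | ⟨h1, h2⟩ <;>
      rcases abs_cases (a + 1) with ⟨h3, h4⟩ | ⟨h3, h4⟩ <;>
      rcases abs_cases (a - 1) with ⟨h5, h6⟩ | ⟨h5, h6⟩ <;> omega
  intro i j k
  induction k using Nat.strong_induction_on generalizing i j with
  | _ k ih =>
    match k with
    | 0 => intro hp hd; exact hinit i j 0 (by norm_num) hp hd
    | 1 => intro hp hd; exact hinit i j 1 (by norm_num) hp hd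
    | (m + 2) =>
      intro hp hd
      push_cast at hp hd
      have hp' : (i + j + ((m + 1 : ℕ) : ℤ)) % 2 = ((n : ℤ) + 1) % 2 := by
        push_cast; omega
      have hd' : |i| + |j| + ((m + 1 : ℕ) : ℤ) + 1 ≤ (n : ℤ) := by
        push_cast; omega
      have hrec1 := hTsig i j (m + 1) (by omega) hp' hd'
      have hp2 : (j + -i + ((m + 1 : ℕ) : ℤ)) % 2 = ((n : ℤ) + 1) % 2 := by
        push_cast; omega
      have hd2 : |j| + |-i| + ((m + 1 : ℕ) : ℤ) + 1 ≤ (n : ℤ) := by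
        rw [abs_neg]; push_cast; omega
      have hrec2 := hT j (-i) (m + 1) (by omega) hp2 hd2
      simp only [Nat.add_sub_cancel] at hrec1 hrec2
      have e1 : Tsig i (j + 1) (m + 1) = T (j + 1) (-i) (m + 1) := by
        apply ih (m + 1) (by omega)
        · push_cast; omega
        · have := (habs j).1; push_cast; omega
      have e2 : Tsig i (j - 1) (m + 1) = T (j - 1) (-i) (m + 1) := by
        apply ih (m + 1) (by omega)
        · push_cast; omega
        · have := (habs j).2; push_cast; omega
      have e3 : Tsig (i + 1) j (m + 1) = T j (-(i + 1)) (m + 1) := by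
        apply ih (m + 1) (by omega)
        · push_cast; omega
        · have := (habs i).1; push_cast; omega
      have e4 : Tsig (i - 1) j (m + 1) = T j (-(i - 1)) (m + 1) := by
        apply ih (m + 1) (by omega)
        · push_cast; omega
        · have := (habs i).2; push_cast; omega
      have e5 : Tsig i j m = T j (-i) m := by
        apply ih m (by omega)
        · push_cast; omega
        · push_cast; omega
      have hnz : T j (-i) m ≠ 0 := by
        apply hnv
        · push_cast; omega
        · rw [abs_neg]; push_cast; omega
      have hneg1 : -(i + 1) = -i - 1 := by ring
      have hneg2 : -(i - 1) = -i + 1 := by ring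
      rw [e1, e2, e3, e4, e5, hneg1, hneg2] at hrec1
      apply mul_right_cancel₀ hnz
      rw [hrec1, hrec2]
      ring
end

section
/- Let q ∈ F with q ≠ 0, set λ(a) = q^a and μ(a) = q^a for all a ∈ ℤ (integer powers of q), and let A be the n×n matrix with all entries equal to 1. If T is a solution of the inhomogeneous T-system for (A, λ, μ) up to level n, then T(0,0,n) = ∏_{m=1}^{⌊n/2⌋} ∏_{j=2m−n}^{n−2m} (1 + q^j), where the inner product runs over all integers j with 2m−n ≤ j ≤ n−2m. -/
section TSystemAux

variable {F : Type*} [Field F]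

noncomputable def Dprod (q : F) (i j : ℤ) (k : ℕ) : F :=
  ∏ m ∈ Finset.Icc 1 (k / 2),
    ∏ l ∈ Finset.Icc (2 * (m : ℤ) - k) ((k : ℤ) - 2 * m), (q ^ i + q ^ (j + l))


lemma prod_top_split (g : ℤ → F) (a b : ℤ) (h : a ≤ b) :
    ∏ l ∈ Finset.Icc a b, g l = (∏ l ∈ Finset.Icc a (b - 1), g l) * g b := by
  have : Finset.Icc a b = insert b (Finset.Icc a (b - 1)) := by
    ext x; simp only [Finset.mem_Icc, Finset.mem_insert]; omega
  rw [this, Finset.prod_insert (by simp)]; ring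

lemma prod_shift (g : ℤ → F) (a b c : ℤ) :
    ∏ l ∈ Finset.Icc a b, g (l + c) = ∏ l ∈ Finset.Icc (a + c) (b + c), g l := by
  rw [← Finset.map_add_right_Icc a b c, Finset.prod_map]
  rfl

lemma prod_swap_identity (g : ℤ → F) (a b : ℤ) (h : a ≤ b) :
    (∏ l ∈ Finset.Icc (a - 2) (b + 2), g l) * (∏ l ∈ Finset.Icc a b, g l)
      = (∏ l ∈ Finset.Icc a (b + 2), g l) * (∏ l ∈ Finset.Icc (a - 2) b, g l) := by
  have h1 : ∏ l ∈ Finset.Icc (a - 2) (b + 2), g l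
      = ((∏ l ∈ Finset.Icc (a - 2) b, g l) * g (b + 1)) * g (b + 2) := by
    rw [prod_top_split g (a - 2) (b + 2) (by omega), show b + 2 - 1 = b + 1 by ring,
      prod_top_split g (a - 2) (b + 1) (by omega), show b + 1 - 1 = b by ring]
  have h2 : ∏ l ∈ Finset.Icc a (b + 2), g l
      = ((∏ l ∈ Finset.Icc a b, g l) * g (b + 1)) * g (b + 2) := by
    rw [prod_top_split g a (b + 2) (by omega), show b + 2 - 1 = b + 1 by ring,
      prod_top_split g a (b + 1) (by omega), show b + 1 - 1 = b by ring]
  rw [h1, h2]; ring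

lemma key_identity (g : ℤ → F) (k : ℕ) :
    (∏ m ∈ Finset.Icc 1 ((k + 2) / 2),
        ∏ l ∈ Finset.Icc (2 * (m : ℤ) - k - 2) ((k : ℤ) - 2 * m + 2), g l)
      * (∏ m ∈ Finset.Icc 1 (k / 2),
        ∏ l ∈ Finset.Icc (2 * (m : ℤ) - k) ((k : ℤ) - 2 * m), g l)
    = g 0 * ∏ m ∈ Finset.Icc 1 ((k + 1) / 2),
        ((∏ l ∈ Finset.Icc (2 * (m : ℤ) - k) ((k : ℤ) - 2 * m + 2), g l)
          * (∏ l ∈ Finset.Icc (2 * (m : ℤ) - k - 2) ((k : ℤ) - 2 * m), g l)) := by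
  have hpt : ∀ m : ℕ, 2 * (m : ℤ) ≤ (k : ℤ) →
      (∏ l ∈ Finset.Icc (2 * (m : ℤ) - k - 2) ((k : ℤ) - 2 * m + 2), g l)
        * (∏ l ∈ Finset.Icc (2 * (m : ℤ) - k) ((k : ℤ) - 2 * m), g l)
      = (∏ l ∈ Finset.Icc (2 * (m : ℤ) - k) ((k : ℤ) - 2 * m + 2), g l)
        * (∏ l ∈ Finset.Icc (2 * (m : ℤ) - k - 2) ((k : ℤ) - 2 * m), g l) := by
    intro m hm
    exact prod_swap_identity g (2 * (m : ℤ) - k) ((k : ℤ) - 2 * m) (by omega)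
  rcases Nat.even_or_odd k with ⟨s, hs⟩ | ⟨s, hs⟩
  · -- k = s + s
    have h1 : (k + 2) / 2 = s + 1 := by omega
    have h2 : k / 2 = s := by omega
    have h3 : (k + 1) / 2 = s := by omega
    rw [h1, h2, h3, Finset.prod_Icc_succ_top (by omega)]
    have hA : Finset.Icc (2 * ((s + 1 : ℕ) : ℤ) - k - 2) ((k : ℤ) - 2 * (s + 1 : ℕ) + 2)
        = {0} := by
      have : ((s : ℤ) + s) = (k : ℤ) := by exact_mod_cast congrArg (Nat.cast : ℕ → ℤ) hs.symm
      rw [show (2 * ((s + 1 : ℕ) : ℤ) - k - 2) = 0 by push_cast; omega,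
        show ((k : ℤ) - 2 * (s + 1 : ℕ) + 2) = 0 by push_cast; omega]
      exact Finset.Icc_self 0
    rw [hA, Finset.prod_singleton]
    rw [mul_comm _ (g 0), mul_assoc, ← Finset.prod_mul_distrib]
    congr 1
    refine Finset.prod_congr rfl fun m hm => ?_
    rw [Finset.mem_Icc] at hm
    exact hpt m (by push_cast; omega)
  · -- k = 2*s + 1
    have h1 : (k + 2) / 2 = s + 1 := by omega
    have h2 : k / 2 = s := by omega
    have h3 : (k + 1) / 2 = s + 1 := by omega
    rw [h1, h2, h3, Finset.prod_Icc_succ_top (by omega), Finset.prod_Icc_succ_top (by omega)]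
    have hA : (∏ l ∈ Finset.Icc (2 * ((s + 1 : ℕ) : ℤ) - k - 2) ((k : ℤ) - 2 * (s + 1 : ℕ) + 2), g l)
        = g (-1) * g 0 * g 1 := by
      rw [show (2 * ((s + 1 : ℕ) : ℤ) - k - 2) = -1 by push_cast; omega,
        show ((k : ℤ) - 2 * (s + 1 : ℕ) + 2) = 1 by push_cast; omega]
      rw [prod_top_split g (-1) 1 (by omega), show (1 : ℤ) - 1 = 0 by ring,
        prod_top_split g (-1) 0 (by omega), show (0 : ℤ) - 1 = -1 by ring,
        Finset.Icc_self, Finset.prod_singleton]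
    have hC1 : Finset.Icc (2 * ((s + 1 : ℕ) : ℤ) - k) ((k : ℤ) - 2 * (s + 1 : ℕ) + 2)
        = {1} := by
      rw [show (2 * ((s + 1 : ℕ) : ℤ) - k) = 1 by push_cast; omega,
        show ((k : ℤ) - 2 * (s + 1 : ℕ) + 2) = 1 by push_cast; omega]
      exact Finset.Icc_self 1
    have hC2 : Finset.Icc (2 * ((s + 1 : ℕ) : ℤ) - k - 2) ((k : ℤ) - 2 * (s + 1 : ℕ))
        = {-1} := by
      rw [show (2 * ((s + 1 : ℕ) : ℤ) - k - 2) = -1 by push_cast; omega,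
        show ((k : ℤ) - 2 * (s + 1 : ℕ)) = -1 by push_cast; omega]
      exact Finset.Icc_self (-1)
    rw [hA, hC1, hC2, Finset.prod_singleton, Finset.prod_singleton]
    have : (∏ m ∈ Finset.Icc 1 s,
          ∏ l ∈ Finset.Icc (2 * (m : ℤ) - k - 2) ((k : ℤ) - 2 * m + 2), g l)
        * (∏ m ∈ Finset.Icc 1 s,
          ∏ l ∈ Finset.Icc (2 * (m : ℤ) - k) ((k : ℤ) - 2 * m), g l)
        = ∏ m ∈ Finset.Icc 1 s,
          ((∏ l ∈ Finset.Icc (2 * (m : ℤ) - k) ((k : ℤ) - 2 * m + 2), g l)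
            * (∏ l ∈ Finset.Icc (2 * (m : ℤ) - k - 2) ((k : ℤ) - 2 * m), g l)) := by
      rw [← Finset.prod_mul_distrib]
      refine Finset.prod_congr rfl fun m hm => ?_
      rw [Finset.mem_Icc] at hm
      exact hpt m (by push_cast; omega)
    calc (∏ m ∈ Finset.Icc 1 s,
          ∏ l ∈ Finset.Icc (2 * (m : ℤ) - k - 2) ((k : ℤ) - 2 * m + 2), g l)
          * (g (-1) * g 0 * g 1)
        * (∏ m ∈ Finset.Icc 1 s,
          ∏ l ∈ Finset.Icc (2 * (m : ℤ) - k) ((k : ℤ) - 2 * m), g l)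
        = g 0 * (((∏ m ∈ Finset.Icc 1 s,
          ∏ l ∈ Finset.Icc (2 * (m : ℤ) - k - 2) ((k : ℤ) - 2 * m + 2), g l)
        * (∏ m ∈ Finset.Icc 1 s,
          ∏ l ∈ Finset.Icc (2 * (m : ℤ) - k) ((k : ℤ) - 2 * m), g l)) * (g 1 * g (-1))) := by
          ring
      _ = _ := by rw [this]

lemma Dprod_recurrence (q : F) (hq : q ≠ 0) (i j : ℤ) (k : ℕ) :
    Dprod q i j (k + 2) * Dprod q i j k
      = q ^ j * Dprod q i (j + 1) (k + 1) * Dprod q i (j - 1) (k + 1)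
        + q ^ i * Dprod q (i + 1) j (k + 1) * Dprod q (i - 1) j (k + 1) := by
  set g : ℤ → F := fun l => q ^ i + q ^ (j + l) with hg
  have e1 : Dprod q i (j + 1) (k + 1) * Dprod q i (j - 1) (k + 1)
      = ∏ m ∈ Finset.Icc 1 ((k + 1) / 2),
          ((∏ l ∈ Finset.Icc (2 * (m : ℤ) - k) ((k : ℤ) - 2 * m + 2), g l)
            * (∏ l ∈ Finset.Icc (2 * (m : ℤ) - k - 2) ((k : ℤ) - 2 * m), g l)) := by
    unfold Dprod
    rw [← Finset.prod_mul_distrib]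
    refine Finset.prod_congr rfl fun m _ => ?_
    have h1 : ∏ l ∈ Finset.Icc (2 * (m : ℤ) - (k + 1 : ℕ)) (((k + 1 : ℕ) : ℤ) - 2 * m),
        (q ^ i + q ^ (j + 1 + l))
        = ∏ l ∈ Finset.Icc (2 * (m : ℤ) - k) ((k : ℤ) - 2 * m + 2), g l := by
      rw [show (∏ l ∈ Finset.Icc (2 * (m : ℤ) - (k + 1 : ℕ)) (((k + 1 : ℕ) : ℤ) - 2 * m),
          (q ^ i + q ^ (j + 1 + l)))
          = ∏ l ∈ Finset.Icc (2 * (m : ℤ) - (k + 1 : ℕ)) (((k + 1 : ℕ) : ℤ) - 2 * m),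
          g (l + 1) from Finset.prod_congr rfl fun l _ => by rw [hg]; congr 1; ring,
        prod_shift g]
      congr 1
      congr 1 <;> push_cast <;> omega
    have h2 : ∏ l ∈ Finset.Icc (2 * (m : ℤ) - (k + 1 : ℕ)) (((k + 1 : ℕ) : ℤ) - 2 * m),
        (q ^ i + q ^ (j - 1 + l))
        = ∏ l ∈ Finset.Icc (2 * (m : ℤ) - k - 2) ((k : ℤ) - 2 * m), g l := by
      rw [show (∏ l ∈ Finset.Icc (2 * (m : ℤ) - (k + 1 : ℕ)) (((k + 1 : ℕ) : ℤ) - 2 * m),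
          (q ^ i + q ^ (j - 1 + l)))
          = ∏ l ∈ Finset.Icc (2 * (m : ℤ) - (k + 1 : ℕ)) (((k + 1 : ℕ) : ℤ) - 2 * m),
          g (l + (-1)) from Finset.prod_congr rfl fun l _ => by rw [hg]; congr 1; ring,
        prod_shift g]
      congr 1
      congr 1 <;> push_cast <;> omega
    rw [h1, h2]
  have e2 : Dprod q (i + 1) j (k + 1) * Dprod q (i - 1) j (k + 1)
      = Dprod q i (j + 1) (k + 1) * Dprod q i (j - 1) (k + 1) := by
    unfold Dprod
    rw [← Finset.prod_mul_distrib, ← Finset.prod_mul_distrib]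
    refine Finset.prod_congr rfl fun m _ => ?_
    rw [← Finset.prod_mul_distrib, ← Finset.prod_mul_distrib]
    refine Finset.prod_congr rfl fun l _ => ?_
    simp only [zpow_add₀ hq, zpow_sub₀ hq, zpow_one]
    field_simp
  have e3 : Dprod q i j (k + 2) * Dprod q i j k
      = g 0 * ∏ m ∈ Finset.Icc 1 ((k + 1) / 2),
          ((∏ l ∈ Finset.Icc (2 * (m : ℤ) - k) ((k : ℤ) - 2 * m + 2), g l)
            * (∏ l ∈ Finset.Icc (2 * (m : ℤ) - k - 2) ((k : ℤ) - 2 * m), g l)) := by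
    rw [← key_identity g k]
    unfold Dprod
    congr 1
    refine Finset.prod_congr rfl fun m _ => ?_
    refine Finset.prod_congr ?_ fun l _ => rfl
    congr 1 <;> push_cast <;> omega
  have e2' : q ^ i * Dprod q (i + 1) j (k + 1) * Dprod q (i - 1) j (k + 1)
      = q ^ i * (Dprod q i (j + 1) (k + 1) * Dprod q i (j - 1) (k + 1)) := by
    rw [mul_assoc, e2]
  have hg0 : g 0 = q ^ i + q ^ j := by rw [hg]; simp
  rw [e3, ← e1, e2', hg0]; ring

end TSystemAux

/-- The generalized Lambda-determinant of the all-ones matrix with coefficients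
`λ(a) = μ(a) = qᵃ` is a product of factors `1 + qʲ`. -/
theorem lambda_determinant_all_ones_q
    {F : Type*} [Field F] (n : ℕ) (hn : 1 ≤ n) (q : F) (hq : q ≠ 0)
    (T : ℤ → ℤ → ℕ → F)
    (hT : IsTSystemSolution n (Matrix.of fun _ _ : Fin n => (1 : F))
      (fun a => q ^ a) (fun a => q ^ a) T) :
    T 0 0 n = ∏ m ∈ Finset.Icc 1 (n / 2),
      ∏ j ∈ Finset.Icc (2 * (m : ℤ) - n) ((n : ℤ) - 2 * m), (1 + q ^ j) := by
  obtain ⟨h0, h1, hrec, hnz⟩ := hT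
  have key : ∀ k : ℕ, ∀ i j : ℤ, k ≤ n → (i + j + (k : ℤ)) % 2 = (n : ℤ) % 2 →
      |i| + |j| + (k : ℤ) ≤ (n : ℤ) → T i j k = Dprod q i j k := by
    intro k
    induction k using Nat.strong_induction_on with
    | _ k IH =>
      match k with
      | 0 =>
        intro i j _ hpar hsz
        rw [h0 i j (by omega) (by push_cast at hsz ⊢; omega)]
        simp [Dprod]
      | 1 =>
        intro i j hkn hpar hsz
        push_cast at hpar hsz
        have hia := le_abs_self i
        have hia' := neg_abs_le i
        have hja := le_abs_self j
        have hja' := neg_abs_le j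
        have hr' : (0 : ℤ) ≤ (j - i + n - 1) / 2 := by omega
        have hc' : (0 : ℤ) ≤ (i + j + n - 1) / 2 := by omega
        set r : ℕ := ((j - i + (n : ℤ) - 1) / 2).toNat with hrdef
        set c : ℕ := ((i + j + (n : ℤ) - 1) / 2).toNat with hcdef
        have hrn : r < n := by simp only [hrdef]; omega
        have hcn : c < n := by simp only [hcdef]; omega
        have := h1 i j ⟨r, hrn⟩ ⟨c, hcn⟩ (by omega) (by omega)
          (by simp only [hrdef]; push_cast; omega)
          (by simp only [hcdef]; push_cast; omega)
        rw [this]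
        simp only [Matrix.of_apply]
        have : Finset.Icc 1 (1 / 2 : ℕ) = ∅ := by decide
        rw [Dprod, this, Finset.prod_empty]
      | (k + 2) =>
        intro i j hkn hpar hsz
        push_cast at hpar hsz
        have habs1 : |j + 1| ≤ |j| + 1 := by
          calc |j + 1| ≤ |j| + |(1 : ℤ)| := abs_add_le j 1
          _ = |j| + 1 := by norm_num
        have habs2 : |j - 1| ≤ |j| + 1 := by
          calc |j - 1| ≤ |j| + |(-1 : ℤ)| := abs_add_le j (-1)
          _ = |j| + 1 := by norm_num
        have habs3 : |i + 1| ≤ |i| + 1 := by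
          calc |i + 1| ≤ |i| + |(1 : ℤ)| := abs_add_le i 1
          _ = |i| + 1 := by norm_num
        have habs4 : |i - 1| ≤ |i| + 1 := by
          calc |i - 1| ≤ |i| + |(-1 : ℤ)| := abs_add_le i (-1)
          _ = |i| + 1 := by norm_num
        have hab : (0:ℤ) ≤ |i| ∧ (0:ℤ) ≤ |j| := ⟨abs_nonneg i, abs_nonneg j⟩
        have hrec' := hrec i j (k + 1) (by omega) (by push_cast; omega) (by push_cast; omega)
        simp only [Nat.add_sub_cancel] at hrec'
        have hI0 : T i j k = Dprod q i j k :=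
          IH k (by omega) i j (by omega) (by push_cast; omega) (by push_cast; omega)
        have hI1 : T i (j + 1) (k + 1) = Dprod q i (j + 1) (k + 1) :=
          IH (k + 1) (by omega) i (j + 1) (by omega) (by push_cast; omega)
            (by push_cast; omega)
        have hI2 : T i (j - 1) (k + 1) = Dprod q i (j - 1) (k + 1) :=
          IH (k + 1) (by omega) i (j - 1) (by omega) (by push_cast; omega)
            (by push_cast; omega)
        have hI3 : T (i + 1) j (k + 1) = Dprod q (i + 1) j (k + 1) :=
          IH (k + 1) (by omega) (i + 1) j (by omega) (by push_cast; omega)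
            (by push_cast; omega)
        have hI4 : T (i - 1) j (k + 1) = Dprod q (i - 1) j (k + 1) :=
          IH (k + 1) (by omega) (i - 1) j (by omega) (by push_cast; omega)
            (by push_cast; omega)
        have hTnz : T i j k ≠ 0 := hnz i j k (by push_cast; omega) (by push_cast; omega)
        have hDnz : Dprod q i j k ≠ 0 := hI0 ▸ hTnz
        have hD := Dprod_recurrence q hq i j k
        rw [hI0, hI1, hI2, hI3, hI4] at hrec'
        have : T i j (k + 1 + 1) * Dprod q i j k = Dprod q i j (k + 2) * Dprod q i j k := by
          rw [hrec', hD]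
        have h22 : k + 1 + 1 = k + 2 := rfl
        rw [h22] at this
        exact mul_right_cancel₀ hDnz this
  have := key n 0 0 le_rfl (by simp) (by simp)
  rw [this, Dprod]
  refine Finset.prod_congr rfl fun m _ => Finset.prod_congr rfl fun l _ => ?_
  rw [zpow_zero, zero_add]
end

section
/- The function T satisfies T(i,j,0) = T(i,j,1) = 1 for all i,j ∈ ℤ, and the inhomogeneous T-system relation T(i,j,k+1)·T(i,j,k−1) = q^j·T(i,j+1,k)·T(i,j−1,k) + q^i·T(i+1,j,k)·T(i−1,j,k) holds for all i,j ∈ ℤ and all integers k ≥ 1. -/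
open Finset

/-- The explicit solution of the inhomogeneous T-system with coefficients
`λ(a) = μ(a) = qᵃ` and initial data `T(i,j,0) = T(i,j,1) = 1`. -/
noncomputable def Texp {F : Type*} [Field F] (q : F) (i j : ℤ) (k : ℕ) : F :=
  q ^ (((k * (k - 1) / 2 : ℕ) : ℤ) * min i j) *
    (∏ m ∈ Finset.Icc (1 : ℤ) (((k : ℤ) - |i - j|) / 2),
      ∏ a ∈ Finset.Icc (2 * m - k + |i - j|) ((k : ℤ) - |i - j| - 2 * m), (1 + q ^ a)) *
    (∏ m ∈ Finset.Icc (1 : ℤ) |i - j|,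
      ∏ a ∈ Finset.Icc m ((k : ℤ) - |i - j| + 2 * m - 2), (1 + q ^ a))

/-- Multiplicity of the factor `1+q^a` in the product part of `Texp`. -/
def Tcnt (d κ a : ℤ) : ℕ :=
  ((κ - d - (a.natAbs : ℤ))/2).toNat + (min d a + 1 - max 1 ((a - κ + d + 3)/2)).toNat

lemma countA (d κ a : ℤ) :
    ((Finset.Icc (1:ℤ) ((κ - d)/2)).filter
      (fun m => 2*m - κ + d ≤ a ∧ a ≤ κ - d - 2*m)).card
      = ((κ - d - (a.natAbs : ℤ))/2).toNat := by
  have h : (Finset.Icc (1:ℤ) ((κ - d)/2)).filter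
      (fun m => 2*m - κ + d ≤ a ∧ a ≤ κ - d - 2*m)
      = Finset.Icc (1:ℤ) ((κ - d - (a.natAbs : ℤ))/2) := by
    ext m
    simp only [Finset.mem_filter, Finset.mem_Icc]
    omega
  rw [h, Int.card_Icc]
  omega

lemma countB (d κ a : ℤ) :
    ((Finset.Icc (1:ℤ) d).filter (fun m => m ≤ a ∧ a ≤ κ - d + 2*m - 2)).card
      = (min d a + 1 - max 1 ((a - κ + d + 3)/2)).toNat := by
  have h : (Finset.Icc (1:ℤ) d).filter (fun m => m ≤ a ∧ a ≤ κ - d + 2*m - 2)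
      = Finset.Icc (max 1 ((a - κ + d + 3)/2)) (min d a) := by
    ext m
    simp only [Finset.mem_filter, Finset.mem_Icc]
    omega
  rw [h, Int.card_Icc]

lemma double_to_pow {F : Type*} [CommMonoid F] (f : ℤ → F) (M : ℤ) (l r : ℤ → ℤ) (L R : ℤ)
    (hsub : ∀ m ∈ Finset.Icc (1:ℤ) M, Finset.Icc (l m) (r m) ⊆ Finset.Icc L R) :
    ∏ m ∈ Finset.Icc (1:ℤ) M, ∏ a ∈ Finset.Icc (l m) (r m), f a
      = ∏ a ∈ Finset.Icc L R,
          f a ^ ((Finset.Icc (1:ℤ) M).filter (fun m => l m ≤ a ∧ a ≤ r m)).card := by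
  have key : ∀ (x : ℤ) (y : ℤ), x ∈ Finset.Icc (1:ℤ) M ∧ y ∈ Finset.Icc (l x) (r x) ↔
      x ∈ (Finset.Icc (1:ℤ) M).filter (fun m => l m ≤ y ∧ y ≤ r m) ∧ y ∈ Finset.Icc L R := by
    intro x y
    simp only [Finset.mem_filter, Finset.mem_Icc]
    constructor
    · rintro ⟨hx, hy⟩
      have := hsub x (Finset.mem_Icc.2 hx) (Finset.mem_Icc.2 hy)
      simp only [Finset.mem_Icc] at this
      exact ⟨⟨hx, hy⟩, this⟩
    · rintro ⟨⟨hx, hy⟩, _⟩; exact ⟨hx, hy⟩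
  rw [Finset.prod_comm' key]
  exact Finset.prod_congr rfl fun a _ => Finset.prod_const (f a)

lemma texp_eq {F : Type*} [Field F] (q : F) (i j : ℤ) (k : ℕ) (L R : ℤ)
    (hL : L ≤ -(k:ℤ)) (hR : (k:ℤ) + ((i-j).natAbs : ℤ) ≤ R) :
    Texp q i j k = q ^ (((k * (k - 1) / 2 : ℕ) : ℤ) * min i j) *
      ∏ a ∈ Finset.Icc L R, (1 + q ^ a) ^ (Tcnt ((i-j).natAbs : ℤ) k a) := by
  rw [Texp, show |i - j| = ((i-j).natAbs : ℤ) from Int.abs_eq_natAbs _]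
  have hA : (∏ m ∈ Finset.Icc (1 : ℤ) (((k : ℤ) - ((i-j).natAbs : ℤ)) / 2),
      ∏ a ∈ Finset.Icc (2 * m - k + ((i-j).natAbs : ℤ)) ((k : ℤ) - ((i-j).natAbs : ℤ) - 2 * m), (1 + q ^ a))
      = ∏ a ∈ Finset.Icc L R,
          (1 + q ^ a) ^ ((((k:ℤ) - ((i-j).natAbs : ℤ) - (a.natAbs : ℤ))/2).toNat) := by
    rw [double_to_pow (fun a => 1 + q ^ a) _ (fun m => 2 * m - k + ((i-j).natAbs : ℤ))
        (fun m => (k : ℤ) - ((i-j).natAbs : ℤ) - 2 * m) L R ?_]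
    · exact Finset.prod_congr rfl fun a _ => by rw [countA]
    · intro m hm
      simp only [Finset.mem_Icc] at hm
      apply Finset.Icc_subset_Icc <;> beta_reduce <;> omega
  have hB : (∏ m ∈ Finset.Icc (1 : ℤ) ((i-j).natAbs : ℤ),
      ∏ a ∈ Finset.Icc m ((k : ℤ) - ((i-j).natAbs : ℤ) + 2 * m - 2), (1 + q ^ a))
      = ∏ a ∈ Finset.Icc L R,
          (1 + q ^ a) ^ ((min ((i-j).natAbs : ℤ) a + 1 - max 1 ((a - k + ((i-j).natAbs : ℤ) + 3)/2)).toNat) := by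
    rw [double_to_pow (fun a => 1 + q ^ a) _ (fun m => m)
        (fun m => (k : ℤ) - ((i-j).natAbs : ℤ) + 2 * m - 2) L R ?_]
    · exact Finset.prod_congr rfl fun a _ => by rw [countB]
    · intro m hm
      simp only [Finset.mem_Icc] at hm
      apply Finset.Icc_subset_Icc <;> beta_reduce <;> omega
  rw [hA, hB, mul_assoc, ← Finset.prod_mul_distrib]
  congr 1
  exact Finset.prod_congr rfl fun a _ => by rw [← pow_add]; rfl

set_option maxHeartbeats 1000000 in
lemma key1 (n : ℕ) (d a : ℤ) (hd : 1 ≤ d) :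
    Tcnt d ((n:ℤ)+2) a + Tcnt d (n:ℤ) a
      = (Tcnt (d+1) ((n:ℤ)+1) a + Tcnt (d-1) ((n:ℤ)+1) a) + (if d ≤ a ∧ a ≤ d then 1 else 0) := by
  simp only [Tcnt]
  rw [show (n:ℤ)+2 - d - (a.natAbs : ℤ) = (n:ℤ)+1 - (d-1) - (a.natAbs : ℤ) by ring,
      show (n:ℤ) - d - (a.natAbs : ℤ) = (n:ℤ)+1 - (d+1) - (a.natAbs : ℤ) by ring,
      show a - ((n:ℤ)+2) + d + 3 = a - ((n:ℤ)+1) + (d-1) + 3 by ring,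
      show a - (n:ℤ) + d + 3 = a - ((n:ℤ)+1) + (d+1) + 3 by ring]
  split_ifs <;> omega

set_option maxHeartbeats 1000000 in
lemma key2a (n : ℕ) (a : ℤ) :
    (if -(n:ℤ) ≤ a ∧ a ≤ -1 then 1 else 0) ≤ Tcnt 0 ((n:ℤ)+2) a + Tcnt 0 (n:ℤ) a := by
  simp only [Tcnt]
  split_ifs <;> omega

set_option maxHeartbeats 1000000 in
lemma key2b (n : ℕ) (a : ℤ) :
    2 * Tcnt 1 ((n:ℤ)+1) a + (if 0 ≤ a ∧ a ≤ 0 then 1 else 0)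
        + (if -(n:ℤ) ≤ a ∧ a ≤ -1 then 1 else 0)
      = Tcnt 0 ((n:ℤ)+2) a + Tcnt 0 (n:ℤ) a + (if 1 ≤ a ∧ a ≤ (n:ℤ) then 1 else 0) := by
  simp only [Tcnt]
  rw [show a - (n:ℤ) + 0 + 3 = a - ((n:ℤ)+1) + 1 + 3 by ring]
  split_ifs <;> omega

lemma my_prod_indicator {F : Type*} [CommMonoid F] (f : ℤ → F) (L R A B : ℤ)
    (hA : L ≤ A) (hB : B ≤ R) :
    (∏ a ∈ Finset.Icc L R, f a ^ (if A ≤ a ∧ a ≤ B then 1 else 0)) = ∏ a ∈ Finset.Icc A B, f a := by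
  have h1 : (∏ a ∈ Finset.Icc L R, f a ^ (if A ≤ a ∧ a ≤ B then 1 else 0))
      = ∏ a ∈ (Finset.Icc L R).filter (fun a => A ≤ a ∧ a ≤ B), f a := by
    rw [Finset.prod_filter]
    refine Finset.prod_congr rfl fun a _ => ?_
    split_ifs <;> simp
  rw [h1]
  congr 1
  ext x
  simp only [Finset.mem_filter, Finset.mem_Icc]
  omega

lemma prod_zpow_sum {F : Type*} [Field F] {q : F} (hq : q ≠ 0) (s : Finset ℤ) (g : ℤ → ℤ) :
    ∏ a ∈ s, q ^ (g a) = q ^ (∑ a ∈ s, g a) := by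
  induction s using Finset.cons_induction with
  | empty => simp
  | cons a s ha ih => rw [Finset.prod_cons, Finset.sum_cons, ih, ← zpow_add₀ hq]

lemma nat_csucc (n : ℕ) : (n+2)*(n+1)/2 = (n+1)*n/2 + (n+1) := by
  obtain ⟨A, hA⟩ : ∃ A, (n+1)*n = A := ⟨_, rfl⟩
  have hev : Even ((n+1)*n) := by simpa [Nat.mul_comm] using Nat.even_mul_succ_self n
  have h2 : 2 ∣ A := hA ▸ hev.two_dvd
  have h3 : (n+2)*(n+1) = A + 2*(n+1) := by rw [← hA]; ring
  rw [h3, hA]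
  omega

lemma nat_fact1 (n : ℕ) : (n+2)*(n+1)/2 + n*(n-1)/2 = 2*((n+1)*n/2) + 1 := by
  cases n with
  | zero => norm_num
  | succ m =>
    obtain ⟨Y, hY⟩ : ∃ Y, (m+1)*m = Y := ⟨_, rfl⟩
    obtain ⟨Z, hZ⟩ : ∃ Z, (m+2)*(m+1) = Z := ⟨_, rfl⟩
    obtain ⟨X, hX⟩ : ∃ X, (m+3)*(m+2) = X := ⟨_, rfl⟩
    have hev : Even ((m+1)*m) := by simpa [Nat.mul_comm] using Nat.even_mul_succ_self m
    have h2 : 2 ∣ Y := hY ▸ hev.two_dvd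
    have e1 : X = Z + 2*(m+2) := by rw [← hX, ← hZ]; ring
    have e2 : Z = Y + 2*(m+1) := by rw [← hZ, ← hY]; ring
    rw [show m+1+2 = m+3 from rfl, show m+1+1 = m+2 from rfl, show m+1-1 = m from rfl,
        hX, hY, hZ]
    omega

lemma gauss (n : ℕ) : ∑ a ∈ Finset.Icc (1:ℤ) (n:ℤ), a = (((n+1)*n/2 : ℕ) : ℤ) := by
  induction n with
  | zero => simp
  | succ m ih =>
    have h : Finset.Icc (1:ℤ) ((m:ℤ)+1) = insert ((m:ℤ)+1) (Finset.Icc (1:ℤ) (m:ℤ)) := by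
      ext x
      simp only [Finset.mem_insert, Finset.mem_Icc]
      omega
    rw [show ((m+1:ℕ):ℤ) = (m:ℤ)+1 by push_cast; ring, h,
        Finset.sum_insert (by simp only [Finset.mem_Icc]; omega), ih,
        show m+1+1 = m+2 from rfl, nat_csucc m]
    push_cast
    ring

lemma texp_symm {F : Type*} [Field F] (q : F) (i j : ℤ) (k : ℕ) :
    Texp q i j k = Texp q j i k := by
  rw [Texp, Texp, abs_sub_comm, min_comm]
set_option maxHeartbeats 1000000 in
lemma main_lt {F : Type*} [Field F] (q : F) (hq : q ≠ 0) (n : ℕ) (i j : ℤ) (hij : i < j) :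
    Texp q i j (n+2) * Texp q i j n =
      q ^ j * Texp q i (j+1) (n+1) * Texp q i (j-1) (n+1) +
        q ^ i * Texp q (i+1) j (n+1) * Texp q (i-1) j (n+1) := by
  have hd1 : (1:ℤ) ≤ j - i := by omega
  rw [texp_eq q i j (n+2) (-(n:ℤ)-2) ((n:ℤ)+(j-i)+3) (by omega) (by omega),
      texp_eq q i j n (-(n:ℤ)-2) ((n:ℤ)+(j-i)+3) (by omega) (by omega),
      texp_eq q i (j+1) (n+1) (-(n:ℤ)-2) ((n:ℤ)+(j-i)+3) (by omega) (by omega),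
      texp_eq q i (j-1) (n+1) (-(n:ℤ)-2) ((n:ℤ)+(j-i)+3) (by omega) (by omega),
      texp_eq q (i+1) j (n+1) (-(n:ℤ)-2) ((n:ℤ)+(j-i)+3) (by omega) (by omega),
      texp_eq q (i-1) j (n+1) (-(n:ℤ)-2) ((n:ℤ)+(j-i)+3) (by omega) (by omega),
      show ((i-j).natAbs : ℤ) = j - i by omega,
      show ((i-(j+1)).natAbs : ℤ) = (j-i)+1 by omega,
      show ((i-(j-1)).natAbs : ℤ) = (j-i)-1 by omega,
      show (((i+1)-j).natAbs : ℤ) = (j-i)-1 by omega,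
      show (((i-1)-j).natAbs : ℤ) = (j-i)+1 by omega,
      show ((n+2:ℕ):ℤ) = (n:ℤ)+2 by push_cast; ring,
      show ((n+1:ℕ):ℤ) = (n:ℤ)+1 by push_cast; ring,
      min_eq_left hij.le,
      min_eq_left (show i ≤ j+1 by omega),
      min_eq_left (show i ≤ j-1 by omega),
      min_eq_left (show i+1 ≤ j by omega),
      min_eq_left (show i-1 ≤ j by omega),
      show n+2-1 = n+1 from rfl, show n+1-1 = n from rfl]
  have hPP : (∏ a ∈ Finset.Icc (-(n:ℤ)-2) ((n:ℤ)+(j-i)+3), (1+q^a)^(Tcnt (j-i) ((n:ℤ)+2) a)) *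
      (∏ a ∈ Finset.Icc (-(n:ℤ)-2) ((n:ℤ)+(j-i)+3), (1+q^a)^(Tcnt (j-i) (n:ℤ) a))
      = ((∏ a ∈ Finset.Icc (-(n:ℤ)-2) ((n:ℤ)+(j-i)+3), (1+q^a)^(Tcnt ((j-i)+1) ((n:ℤ)+1) a)) *
         (∏ a ∈ Finset.Icc (-(n:ℤ)-2) ((n:ℤ)+(j-i)+3), (1+q^a)^(Tcnt ((j-i)-1) ((n:ℤ)+1) a))) *
        (1 + q^(j-i)) := by
    calc (∏ a ∈ Finset.Icc (-(n:ℤ)-2) ((n:ℤ)+(j-i)+3), (1+q^a)^(Tcnt (j-i) ((n:ℤ)+2) a)) *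
        (∏ a ∈ Finset.Icc (-(n:ℤ)-2) ((n:ℤ)+(j-i)+3), (1+q^a)^(Tcnt (j-i) (n:ℤ) a))
        = ∏ a ∈ Finset.Icc (-(n:ℤ)-2) ((n:ℤ)+(j-i)+3),
            (1+q^a)^(Tcnt (j-i) ((n:ℤ)+2) a + Tcnt (j-i) (n:ℤ) a) := by
          rw [← Finset.prod_mul_distrib]
          exact Finset.prod_congr rfl fun a _ => (pow_add _ _ _).symm
      _ = ∏ a ∈ Finset.Icc (-(n:ℤ)-2) ((n:ℤ)+(j-i)+3),
            ((1+q^a)^(Tcnt ((j-i)+1) ((n:ℤ)+1) a) * (1+q^a)^(Tcnt ((j-i)-1) ((n:ℤ)+1) a) *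
              (1+q^a)^(if (j-i) ≤ a ∧ a ≤ (j-i) then 1 else 0)) := by
          refine Finset.prod_congr rfl fun a _ => ?_
          rw [← pow_add, ← pow_add, key1 n (j-i) a hd1]
      _ = ((∏ a ∈ Finset.Icc (-(n:ℤ)-2) ((n:ℤ)+(j-i)+3), (1+q^a)^(Tcnt ((j-i)+1) ((n:ℤ)+1) a)) *
           (∏ a ∈ Finset.Icc (-(n:ℤ)-2) ((n:ℤ)+(j-i)+3), (1+q^a)^(Tcnt ((j-i)-1) ((n:ℤ)+1) a))) *
          (∏ a ∈ Finset.Icc (-(n:ℤ)-2) ((n:ℤ)+(j-i)+3),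
            (1+q^a)^(if (j-i) ≤ a ∧ a ≤ (j-i) then 1 else 0)) := by
          rw [Finset.prod_mul_distrib, Finset.prod_mul_distrib]
      _ = _ := by
          rw [my_prod_indicator (fun a => 1+q^a) _ _ (j-i) (j-i) (by omega) (by omega),
            Finset.Icc_self, Finset.prod_singleton]
  set AP := ∏ a ∈ Finset.Icc (-(n:ℤ)-2) ((n:ℤ)+(j-i)+3), (1+q^a)^(Tcnt ((j-i)+1) ((n:ℤ)+1) a) with hAPdef
  set AM := ∏ a ∈ Finset.Icc (-(n:ℤ)-2) ((n:ℤ)+(j-i)+3), (1+q^a)^(Tcnt ((j-i)-1) ((n:ℤ)+1) a) with hAMdef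
  set P2 := ∏ a ∈ Finset.Icc (-(n:ℤ)-2) ((n:ℤ)+(j-i)+3), (1+q^a)^(Tcnt (j-i) ((n:ℤ)+2) a) with hP2def
  set P0 := ∏ a ∈ Finset.Icc (-(n:ℤ)-2) ((n:ℤ)+(j-i)+3), (1+q^a)^(Tcnt (j-i) (n:ℤ) a) with hP0def
  have hC : (((n+2)*(n+1)/2 : ℕ) : ℤ) + ((n*(n-1)/2 : ℕ) : ℤ) = 2*(((n+1)*n/2 : ℕ) : ℤ) + 1 := by
    exact_mod_cast nat_fact1 n
  have hS2 : (((n+2)*(n+1)/2 : ℕ) : ℤ)*i + ((n*(n-1)/2 : ℕ) : ℤ)*i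
      = i + ((((n+1)*n/2 : ℕ) : ℤ)*(i+1) + (((n+1)*n/2 : ℕ) : ℤ)*(i-1)) := by
    linear_combination i * hC
  have hS1 : (((n+2)*(n+1)/2 : ℕ) : ℤ)*i + ((n*(n-1)/2 : ℕ) : ℤ)*i + (j-i)
      = j + ((((n+1)*n/2 : ℕ) : ℤ)*i + (((n+1)*n/2 : ℕ) : ℤ)*i) := by
    linear_combination i * hC
  calc q ^ ((((n+2)*(n+1)/2 : ℕ) : ℤ) * i) * P2 * (q ^ (((n*(n-1)/2 : ℕ) : ℤ) * i) * P0)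
      = q ^ ((((n+2)*(n+1)/2 : ℕ) : ℤ)*i + ((n*(n-1)/2 : ℕ) : ℤ)*i) * (P2 * P0) := by
        rw [zpow_add₀ hq]; ring
    _ = q ^ ((((n+2)*(n+1)/2 : ℕ) : ℤ)*i + ((n*(n-1)/2 : ℕ) : ℤ)*i + (j-i)) * (AP * AM)
        + q ^ ((((n+2)*(n+1)/2 : ℕ) : ℤ)*i + ((n*(n-1)/2 : ℕ) : ℤ)*i) * (AP * AM) := by
        rw [hPP, zpow_add₀ hq (_ + _) (j-i)]; ring
    _ = q ^ (j + ((((n+1)*n/2 : ℕ) : ℤ)*i + (((n+1)*n/2 : ℕ) : ℤ)*i)) * (AP * AM)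
        + q ^ (i + ((((n+1)*n/2 : ℕ) : ℤ)*(i+1) + (((n+1)*n/2 : ℕ) : ℤ)*(i-1))) * (AP * AM) := by
        rw [hS1, hS2]
    _ = q ^ j * (q ^ ((((n+1)*n/2 : ℕ) : ℤ) * i) * AP) * (q ^ ((((n+1)*n/2 : ℕ) : ℤ) * i) * AM)
        + q ^ i * (q ^ ((((n+1)*n/2 : ℕ) : ℤ) * (i+1)) * AM) * (q ^ ((((n+1)*n/2 : ℕ) : ℤ) * (i-1)) * AP) := by
        rw [zpow_add₀ hq j, zpow_add₀ hq i, zpow_add₀ hq (_*i) (_*i), zpow_add₀ hq (_*(i+1)) (_*(i-1))]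
        ring
set_option maxHeartbeats 1000000 in
lemma main_eq {F : Type*} [Field F] (q : F) (hq : q ≠ 0) (n : ℕ) (i : ℤ) :
    Texp q i i (n+2) * Texp q i i n =
      q ^ i * Texp q i (i+1) (n+1) * Texp q i (i-1) (n+1) +
        q ^ i * Texp q (i+1) i (n+1) * Texp q (i-1) i (n+1) := by
  rw [texp_eq q i i (n+2) (-(n:ℤ)-2) ((n:ℤ)+3) (by omega) (by omega),
      texp_eq q i i n (-(n:ℤ)-2) ((n:ℤ)+3) (by omega) (by omega),
      texp_eq q i (i+1) (n+1) (-(n:ℤ)-2) ((n:ℤ)+3) (by omega) (by omega),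
      texp_eq q i (i-1) (n+1) (-(n:ℤ)-2) ((n:ℤ)+3) (by omega) (by omega),
      texp_eq q (i+1) i (n+1) (-(n:ℤ)-2) ((n:ℤ)+3) (by omega) (by omega),
      texp_eq q (i-1) i (n+1) (-(n:ℤ)-2) ((n:ℤ)+3) (by omega) (by omega),
      show ((i-i).natAbs : ℤ) = 0 by omega,
      show ((i-(i+1)).natAbs : ℤ) = 1 by omega,
      show ((i-(i-1)).natAbs : ℤ) = 1 by omega,
      show (((i+1)-i).natAbs : ℤ) = 1 by omega,
      show (((i-1)-i).natAbs : ℤ) = 1 by omega,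
      show ((n+2:ℕ):ℤ) = (n:ℤ)+2 by push_cast; ring,
      show ((n+1:ℕ):ℤ) = (n:ℤ)+1 by push_cast; ring,
      min_self i,
      min_eq_left (show i ≤ i+1 by omega),
      min_eq_right (show i-1 ≤ i by omega),
      min_eq_right (show i ≤ i+1 by omega),
      min_eq_left (show i-1 ≤ i by omega),
      show n+2-1 = n+1 from rfl, show n+1-1 = n from rfl]
  -- abbreviations
  have hC : (((n+2)*(n+1)/2 : ℕ) : ℤ) + ((n*(n-1)/2 : ℕ) : ℤ) = 2*(((n+1)*n/2 : ℕ) : ℤ) + 1 := by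
    exact_mod_cast nat_fact1 n
  -- the common-part exponent
  have hPP : (∏ a ∈ Finset.Icc (-(n:ℤ)-2) ((n:ℤ)+3), (1+q^a)^(Tcnt 0 ((n:ℤ)+2) a)) *
      (∏ a ∈ Finset.Icc (-(n:ℤ)-2) ((n:ℤ)+3), (1+q^a)^(Tcnt 0 (n:ℤ) a))
      = (∏ a ∈ Finset.Icc (-(n:ℤ)-2) ((n:ℤ)+3),
          (1+q^a)^(Tcnt 0 ((n:ℤ)+2) a + Tcnt 0 (n:ℤ) a
            - (if -(n:ℤ) ≤ a ∧ a ≤ -1 then 1 else 0))) *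
        (q^(-(((n+1)*n/2 : ℕ) : ℤ)) * ∏ a ∈ Finset.Icc (1:ℤ) (n:ℤ), (1+q^a)) := by
    calc (∏ a ∈ Finset.Icc (-(n:ℤ)-2) ((n:ℤ)+3), (1+q^a)^(Tcnt 0 ((n:ℤ)+2) a)) *
        (∏ a ∈ Finset.Icc (-(n:ℤ)-2) ((n:ℤ)+3), (1+q^a)^(Tcnt 0 (n:ℤ) a))
        = ∏ a ∈ Finset.Icc (-(n:ℤ)-2) ((n:ℤ)+3),
            ((1+q^a)^(Tcnt 0 ((n:ℤ)+2) a + Tcnt 0 (n:ℤ) a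
              - (if -(n:ℤ) ≤ a ∧ a ≤ -1 then 1 else 0)) *
             (1+q^a)^(if -(n:ℤ) ≤ a ∧ a ≤ -1 then 1 else 0)) := by
          rw [← Finset.prod_mul_distrib]
          refine Finset.prod_congr rfl fun a _ => ?_
          rw [← pow_add, ← pow_add]
          congr 1
          have := key2a n a
          omega
      _ = (∏ a ∈ Finset.Icc (-(n:ℤ)-2) ((n:ℤ)+3),
            (1+q^a)^(Tcnt 0 ((n:ℤ)+2) a + Tcnt 0 (n:ℤ) a
              - (if -(n:ℤ) ≤ a ∧ a ≤ -1 then 1 else 0))) *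
          (∏ a ∈ Finset.Icc (-(n:ℤ)) (-1:ℤ), (1+q^a)) := by
          rw [Finset.prod_mul_distrib,
            my_prod_indicator (fun a => 1+q^a) _ _ (-(n:ℤ)) (-1) (by omega) (by omega)]
      _ = _ := by
          congr 1
          have himg : Finset.Icc (-(n:ℤ)) (-1:ℤ)
              = Finset.image (fun a => -a) (Finset.Icc (1:ℤ) (n:ℤ)) := by
            ext x
            simp only [Finset.mem_image, Finset.mem_Icc]
            constructor
            · intro hx; exact ⟨-x, by omega, by ring⟩
            · rintro ⟨y, hy, rfl⟩; omega
          rw [himg, Finset.prod_image (fun x _ y _ h => by omega)]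
          have hflip : ∀ a ∈ Finset.Icc (1:ℤ) (n:ℤ), 1 + q^(-a) = q^(-a) * (1+q^a) := by
            intro a _
            rw [mul_add, mul_one, ← zpow_add₀ hq, show -a + a = 0 by ring, zpow_zero]
            exact add_comm _ _
          rw [Finset.prod_congr rfl hflip, Finset.prod_mul_distrib, prod_zpow_sum hq]
          congr 2
          rw [Finset.sum_neg_distrib, gauss n]
  have hQQ : (∏ a ∈ Finset.Icc (-(n:ℤ)-2) ((n:ℤ)+3), (1+q^a)^(Tcnt 1 ((n:ℤ)+1) a)) *
      (∏ a ∈ Finset.Icc (-(n:ℤ)-2) ((n:ℤ)+3), (1+q^a)^(Tcnt 1 ((n:ℤ)+1) a)) * 2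
      = (∏ a ∈ Finset.Icc (-(n:ℤ)-2) ((n:ℤ)+3),
          (1+q^a)^(Tcnt 0 ((n:ℤ)+2) a + Tcnt 0 (n:ℤ) a
            - (if -(n:ℤ) ≤ a ∧ a ≤ -1 then 1 else 0))) *
        (∏ a ∈ Finset.Icc (1:ℤ) (n:ℤ), (1+q^a)) := by
    have h2 : (2:F) = ∏ a ∈ Finset.Icc (-(n:ℤ)-2) ((n:ℤ)+3),
        (1+q^a)^(if (0:ℤ) ≤ a ∧ a ≤ 0 then 1 else 0) := by
      rw [my_prod_indicator (fun a => 1+q^a) _ _ 0 0 (by omega) (by omega),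
        Finset.Icc_self, Finset.prod_singleton, zpow_zero]
      norm_num
    rw [h2, ← Finset.prod_mul_distrib, ← Finset.prod_mul_distrib,
      ← my_prod_indicator (fun a => 1+q^a) (-(n:ℤ)-2) ((n:ℤ)+3) 1 (n:ℤ) (by omega) (by omega),
      ← Finset.prod_mul_distrib]
    refine Finset.prod_congr rfl fun a _ => ?_
    rw [← pow_add, ← pow_add, ← pow_add]
    congr 1
    have h1 := key2a n a
    have h3 := key2b n a
    omega
  set A := ∏ a ∈ Finset.Icc (-(n:ℤ)-2) ((n:ℤ)+3), (1+q^a)^(Tcnt 1 ((n:ℤ)+1) a) with hAdef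
  set P2 := ∏ a ∈ Finset.Icc (-(n:ℤ)-2) ((n:ℤ)+3), (1+q^a)^(Tcnt 0 ((n:ℤ)+2) a) with hP2def
  set P0 := ∏ a ∈ Finset.Icc (-(n:ℤ)-2) ((n:ℤ)+3), (1+q^a)^(Tcnt 0 (n:ℤ) a) with hP0def
  set CC := ∏ a ∈ Finset.Icc (-(n:ℤ)-2) ((n:ℤ)+3),
      (1+q^a)^(Tcnt 0 ((n:ℤ)+2) a + Tcnt 0 (n:ℤ) a
        - (if -(n:ℤ) ≤ a ∧ a ≤ -1 then 1 else 0)) with hCCdef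
  set E := ∏ a ∈ Finset.Icc (1:ℤ) (n:ℤ), (1+q^a) with hEdef
  have hS : (((n+2)*(n+1)/2 : ℕ) : ℤ)*i + ((n*(n-1)/2 : ℕ) : ℤ)*i + (-(((n+1)*n/2 : ℕ) : ℤ))
      = i + ((((n+1)*n/2 : ℕ) : ℤ)*i + (((n+1)*n/2 : ℕ) : ℤ)*(i-1)) := by
    linear_combination i * hC
  calc q ^ ((((n+2)*(n+1)/2 : ℕ) : ℤ) * i) * P2 * (q ^ (((n*(n-1)/2 : ℕ) : ℤ) * i) * P0)
      = q ^ ((((n+2)*(n+1)/2 : ℕ) : ℤ)*i + ((n*(n-1)/2 : ℕ) : ℤ)*i) * (P2 * P0) := by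
        rw [zpow_add₀ hq]; ring
    _ = q ^ ((((n+2)*(n+1)/2 : ℕ) : ℤ)*i + ((n*(n-1)/2 : ℕ) : ℤ)*i + (-(((n+1)*n/2 : ℕ) : ℤ)))
          * (CC * E) := by
        rw [hPP, zpow_add₀ hq (_ + _) (-(((n+1)*n/2 : ℕ) : ℤ))]; ring
    _ = q ^ (i + ((((n+1)*n/2 : ℕ) : ℤ)*i + (((n+1)*n/2 : ℕ) : ℤ)*(i-1))) * (A * A * 2) := by
        rw [hS, hQQ]
    _ = q ^ i * (q ^ ((((n+1)*n/2 : ℕ) : ℤ) * i) * A) * (q ^ ((((n+1)*n/2 : ℕ) : ℤ) * (i-1)) * A)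
        + q ^ i * (q ^ ((((n+1)*n/2 : ℕ) : ℤ) * i) * A) * (q ^ ((((n+1)*n/2 : ℕ) : ℤ) * (i-1)) * A) := by
        rw [zpow_add₀ hq i, zpow_add₀ hq (_*i) (_*(i-1))]
        ring
lemma texp_zero {F : Type*} [Field F] (q : F) (i j : ℤ) : Texp q i j 0 = 1 := by
  rw [texp_eq q i j 0 0 (((i-j).natAbs : ℤ)) (by omega) (by omega)]
  have h : ∀ a ∈ Finset.Icc (0:ℤ) (((i-j).natAbs : ℤ)),
      (1+q^a)^(Tcnt (((i-j).natAbs : ℤ)) ((0:ℕ):ℤ) a) = 1 := by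
    intro a _
    have hz : Tcnt (((i-j).natAbs : ℤ)) ((0:ℕ):ℤ) a = 0 := by
      simp only [Tcnt]
      omega
    rw [hz, pow_zero]
  rw [Finset.prod_congr rfl h, Finset.prod_const_one,
    show (0 * (0-1)/2 : ℕ) = 0 by norm_num, Nat.cast_zero, zero_mul, zpow_zero, mul_one]

lemma texp_one {F : Type*} [Field F] (q : F) (i j : ℤ) : Texp q i j 1 = 1 := by
  rw [texp_eq q i j 1 (-1) (1 + ((i-j).natAbs : ℤ)) (by omega) (by omega)]
  have h : ∀ a ∈ Finset.Icc (-1:ℤ) (1 + ((i-j).natAbs : ℤ)),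
      (1+q^a)^(Tcnt (((i-j).natAbs : ℤ)) ((1:ℕ):ℤ) a) = 1 := by
    intro a _
    have hz : Tcnt (((i-j).natAbs : ℤ)) ((1:ℕ):ℤ) a = 0 := by
      simp only [Tcnt]
      omega
    rw [hz, pow_zero]
  rw [Finset.prod_congr rfl h, Finset.prod_const_one,
    show (1 * (1-1)/2 : ℕ) = 0 by norm_num, Nat.cast_zero, zero_mul, zpow_zero, mul_one]

/-- `Texp` has initial values `1` and satisfies the inhomogeneous T-system relation
with coefficients `λ(i) = qⁱ`, `μ(j) = qʲ`. -/
theorem texp_initial_values_and_recurrence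
    {F : Type*} [Field F] (q : F) (hq : q ≠ 0) :
    (∀ i j : ℤ, Texp q i j 0 = 1 ∧ Texp q i j 1 = 1) ∧
    (∀ i j : ℤ, ∀ k : ℕ, 1 ≤ k →
      Texp q i j (k + 1) * Texp q i j (k - 1) =
        q ^ j * Texp q i (j + 1) k * Texp q i (j - 1) k +
          q ^ i * Texp q (i + 1) j k * Texp q (i - 1) j k) := by
  constructor
  · exact fun i j => ⟨texp_zero q i j, texp_one q i j⟩
  · intro i j k hk
    obtain ⟨n, rfl⟩ : ∃ n, k = n + 1 := ⟨k - 1, by omega⟩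
    rw [show n+1+1 = n+2 from rfl, show n+1-1 = n from rfl]
    rcases lt_trichotomy i j with h | h | h
    · exact main_lt q hq n i j h
    · subst h
      exact main_eq q hq n i
    · have h2 := main_lt q hq n j i h
      rw [texp_symm q j i (n+2), texp_symm q j i n, texp_symm q j (i+1) (n+1),
          texp_symm q j (i-1) (n+1), texp_symm q (j+1) i (n+1), texp_symm q (j-1) i (n+1)] at h2
      rw [h2]
      ring
end

section
/- Let F be a field and λ, μ, a, b, c, d, x, x' ∈ F with b ≠ 0, x ≠ 0 and x' ≠ 0. Define the 2×2 matrices V = [[μ·a/x, λ·d/x],[0, 1]], U = [[1, 0],[c/b, x/b]], U' = [[1, 0],[c/x', μ·a/x']], V' = [[x'/b, λ·d/b],[0, 1]]. Then V·U = U'·V' if and only if x·x' = μ·a·b + λ·c·d. -/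
/-- The local exchange relation `V·U = U'·V'` holds iff `x·x' = μ·a·b + λ·c·d`. -/
theorem VU_eq_UpVp_iff
    {F : Type*} [Field F] (lam mu a b c d x x' : F)
    (hb : b ≠ 0) (hx : x ≠ 0) (hx' : x' ≠ 0) :
    (!![mu * a / x, lam * d / x; 0, 1] : Matrix (Fin 2) (Fin 2) F) *
        !![1, 0; c / b, x / b] =
      (!![1, 0; c / x', mu * a / x'] : Matrix (Fin 2) (Fin 2) F) *
        !![x' / b, lam * d / b; 0, 1] ↔
    x * x' = mu * a * b + lam * c * d := by
  rw [Matrix.mul_fin_two, Matrix.mul_fin_two, ← Matrix.ext_iff]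
  simp only [Fin.forall_fin_two, Matrix.cons_val', Matrix.cons_val_zero, Matrix.cons_val_one,
    Matrix.head_cons, Matrix.head_fin_const, Matrix.empty_val', Matrix.cons_val_fin_one,
    Matrix.of_apply]
  constructor
  · rintro ⟨⟨h1, -⟩, -⟩
    field_simp at h1
    apply mul_left_cancel₀ (mul_ne_zero hx hb)
    linear_combination (-(x * b)) * h1
  · intro h
    refine ⟨⟨?_, ?_⟩, ?_, ?_⟩ <;> field_simp
    · linear_combination -h
    · linear_combination
    · ring
    · linear_combination h
end

section
/- Let F be a field and λ, μ, a, b, c, d ∈ F with b ≠ 0, c ≠ 0 and d ≠ 0. Then the following identity of 3×3 matrices holds: [[1,0,0],[c/b, a/b, 0],[0,0,1]] · [[1,0,0],[0, μ·c/d, λ·b/d],[0,0,1]] = [[1,0,0],[0, c/d, λ·a/d],[0,0,1]] · [[1,0,0],[d/b, μ·a/b, 0],[0,0,1]]. -/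
/-- The exchange relation `U₁(a,b,c)·V₂(b,c,d;λ,μ) = V'₂(a,c,d;λ,μ)·U'₁(a,b,d;λ,μ)`
between embedded elementary transfer matrices. -/
theorem U1V2_eq_Vp2Up1
    {F : Type*} [Field F] (lam mu a b c d : F)
    (hb : b ≠ 0) (hc : c ≠ 0) (hd : d ≠ 0) :
    (!![1, 0, 0; c / b, a / b, 0; 0, 0, 1] : Matrix (Fin 3) (Fin 3) F) *
        !![1, 0, 0; 0, mu * c / d, lam * b / d; 0, 0, 1] =
      (!![1, 0, 0; 0, c / d, lam * a / d; 0, 0, 1] : Matrix (Fin 3) (Fin 3) F) *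
        !![1, 0, 0; d / b, mu * a / b, 0; 0, 0, 1] := by
  ext i j
  fin_cases i <;> fin_cases j <;>
    simp [Matrix.mul_apply, Fin.sum_univ_succ] <;> field_simp <;> ring
end

section
/- Let R be a commutative ring, λ, μ ∈ R, and let i, j ≥ 0 be integers. Then Σ_{m=0}^{min(i,j)} ( (i+j−m)! / ( (i−m)!·(j−m)!·m! ) ) · λ^{j−m} · μ^m = Σ_{k=0}^{min(i,j)} binom(i,k)·binom(j,k)·(λ+μ)^k·λ^{j−k}. (The left-hand side is the coefficient of z^i w^j in the formal power series 1/(1 − z − λw − μzw); the identity expresses the LU decomposition Z = B(1,1)^t·B(λ+μ,λ) entrywise, where B(α,β)_{k,ℓ} = binom(ℓ,k)·α^k·β^{ℓ−k}.) -/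
open Finset


-- trinomial as product of binomials
lemma trinom_eq_mul (i j m : ℕ) (hmi : m ≤ i) (hmj : m ≤ j) :
    (i + j - m).factorial / ((i - m).factorial * (j - m).factorial * m.factorial)
      = j.choose m * (i + j - m).choose (i - m) := by
  have him : i - m ≤ i + j - m := by omega
  have h1 : (i + j - m).choose (i - m) * (i - m).factorial * ((i + j - m) - (i - m)).factorial
      = (i + j - m).factorial := Nat.choose_mul_factorial_mul_factorial him
  have h2 : (i + j - m) - (i - m) = j := by omega
  rw [h2] at h1
  have h3 : j.choose m * m.factorial * (j - m).factorial = j.factorial :=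
    Nat.choose_mul_factorial_mul_factorial hmj
  have hpos : 0 < (i - m).factorial * (j - m).factorial * m.factorial := by
    positivity
  have key : (i + j - m).factorial
      = j.choose m * (i + j - m).choose (i - m) *
          ((i - m).factorial * (j - m).factorial * m.factorial) :=
  calc (i + j - m).factorial
      = (i + j - m).choose (i - m) * (i - m).factorial * j.factorial := h1.symm
    _ = (i + j - m).choose (i - m) * (i - m).factorial *
          (j.choose m * m.factorial * (j - m).factorial) := by rw [h3]
    _ = j.choose m * (i + j - m).choose (i - m) *
          ((i - m).factorial * (j - m).factorial * m.factorial) := by ring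
  rw [key, Nat.mul_div_cancel _ hpos]

lemma vandermonde_aux (i jm im : ℕ) (him : im ≤ i) :
    (i + jm).choose im = ∑ t ∈ range (im + 1), i.choose (i - im + t) * jm.choose t := by
  rw [Nat.add_choose_eq, Finset.Nat.sum_antidiagonal_eq_sum_range_succ_mk,
    ← Finset.sum_range_reflect]
  refine Finset.sum_congr rfl fun t ht => ?_
  simp only [mem_range] at ht
  have ht' : t ≤ im := by omega
  simp only []
  have h1 : im.succ - 1 - t = im - t := by omega
  have h2 : im - (im - t) = t := by omega
  have h3 : i - im + t = i - (im - t) := by omega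
  rw [h1, h2, h3, Nat.choose_symm (by omega)]

lemma key_nat (i j m : ℕ) (hmi : m ≤ i) (hmj : m ≤ j) :
    (i + j - m).factorial / ((i - m).factorial * (j - m).factorial * m.factorial)
      = ∑ k ∈ range (min i j + 1),
          if m ≤ k then i.choose k * j.choose k * k.choose m else 0 := by
  have hstep1 : ∀ k ∈ range (min i j + 1),
      (if m ≤ k then i.choose k * j.choose k * k.choose m else 0)
        = if m ≤ k then j.choose m * (i.choose k * (j - m).choose (k - m)) else 0 := by
    intro k hk
    simp only [mem_range] at hk
    split
    · next hmk =>
      have : j.choose k * k.choose m = j.choose m * (j - m).choose (k - m) :=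
        Nat.choose_mul hmk
      calc i.choose k * j.choose k * k.choose m
          = i.choose k * (j.choose k * k.choose m) := by ring
        _ = j.choose m * (i.choose k * (j - m).choose (k - m)) := by rw [this]; ring
    · rfl
  rw [Finset.sum_congr rfl hstep1]
  have hfil : Finset.filter (fun k => m ≤ k) (range (min i j + 1)) = Ico m (min i j + 1) := by
    ext k; simp [Nat.lt_succ_iff]; omega
  rw [← Finset.sum_filter, hfil, Finset.sum_Ico_eq_sum_range, ← Finset.mul_sum,
    trinom_eq_mul i j m hmi hmj]
  congr 1
  have hij : i + j - m = i + (j - m) := by omega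
  rw [hij, vandermonde_aux i (j - m) (i - m) (by omega)]
  have hsub : range (min i j + 1 - m) ⊆ range (i - m + 1) := by
    intro t ht; simp only [mem_range] at *; omega
  rw [← Finset.sum_subset hsub (fun t ht ht' => ?_)]
  · refine Finset.sum_congr rfl fun t ht => ?_
    simp only [mem_range] at ht
    congr 1
    · congr 1; omega
    · congr 1; omega
  · simp only [mem_range] at ht ht'
    have : min i j = j := by omega
    have hz : j - m < t := by omega
    rw [Nat.choose_eq_zero_of_lt hz, mul_zero]


/-- Entrywise LU decomposition identity: the coefficient of `zⁱwʲ` in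
`1/(1 − z − λw − μzw)`, written as a sum of trinomial coefficients, equals the
`(i,j)` entry of the product `B(1,1)ᵗ·B(λ+μ,λ)`. -/
theorem trinomial_LU_identity
    {R : Type*} [CommRing R] (lam mu : R) (i j : ℕ) :
    ∑ m ∈ Finset.range (min i j + 1),
        ((Nat.factorial (i + j - m) /
          (Nat.factorial (i - m) * Nat.factorial (j - m) * Nat.factorial m) : ℕ) : R) *
          lam ^ (j - m) * mu ^ m =
      ∑ k ∈ Finset.range (min i j + 1),
        (i.choose k : R) * (j.choose k : R) * (lam + mu) ^ k * lam ^ (j - k) := by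
  calc ∑ m ∈ Finset.range (min i j + 1),
        ((Nat.factorial (i + j - m) /
          (Nat.factorial (i - m) * Nat.factorial (j - m) * Nat.factorial m) : ℕ) : R) *
          lam ^ (j - m) * mu ^ m
      = ∑ m ∈ Finset.range (min i j + 1), ∑ k ∈ Finset.range (min i j + 1),
          (if m ≤ k then ((i.choose k * j.choose k * k.choose m : ℕ) : R) *
            lam ^ (j - m) * mu ^ m else 0) := by
        refine Finset.sum_congr rfl fun m hm => ?_
        simp only [mem_range] at hm
        rw [key_nat i j m (by omega) (by omega)]
        push_cast [apply_ite (Nat.cast : ℕ → R)]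
        rw [Finset.sum_mul, Finset.sum_mul]
        refine Finset.sum_congr rfl fun k _ => ?_
        split <;> simp
    _ = ∑ k ∈ Finset.range (min i j + 1), ∑ m ∈ Finset.range (min i j + 1),
          (if m ≤ k then ((i.choose k * j.choose k * k.choose m : ℕ) : R) *
            lam ^ (j - m) * mu ^ m else 0) := Finset.sum_comm
    _ = ∑ k ∈ Finset.range (min i j + 1),
        (i.choose k : R) * (j.choose k : R) * (lam + mu) ^ k * lam ^ (j - k) := by
        refine Finset.sum_congr rfl fun k hk => ?_
        simp only [mem_range] at hk
        have hfil : Finset.filter (fun m => m ≤ k) (range (min i j + 1))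
            = range (k + 1) := by
          ext m; simp only [mem_filter, mem_range]; omega
        rw [← Finset.sum_filter, hfil, show lam + mu = mu + lam from add_comm _ _,
          add_pow, Finset.mul_sum, Finset.sum_mul]
        refine Finset.sum_congr rfl fun m hm => ?_
        simp only [mem_range] at hm
        have hl : lam ^ (j - m) = lam ^ (k - m) * lam ^ (j - k) := by
          rw [← pow_add]; congr 1; omega
        push_cast
        rw [hl]; ring
end

section
/- Let R be a commutative ring, λ, μ ∈ R, and n ≥ 1 an integer. Let M be the n×n matrix with rows and columns indexed by 0, 1, …, n−1 and entries M_{i,j} = Σ_{k=0}^{min(i,j)} binom(i,k)·binom(j,k)·(λ+μ)^k·λ^{j−k}. Then det M = (λ+μ)^{n(n−1)/2}. -/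
/-- The determinant of the `n×n` matrix with entries
`M_{i,j} = Σ_k binom(i,k)·binom(j,k)·(λ+μ)ᵏ·λ^{j−k}` equals `(λ+μ)^{n(n−1)/2}`. -/
theorem det_LU_matrix
    {R : Type*} [CommRing R] (lam mu : R) (n : ℕ) (hn : 1 ≤ n) :
    (Matrix.of fun i j : Fin n =>
        ∑ k ∈ Finset.range (min (i : ℕ) (j : ℕ) + 1),
          ((i : ℕ).choose k : R) * ((j : ℕ).choose k : R) *
            (lam + mu) ^ k * lam ^ ((j : ℕ) - k)).det =
      (lam + mu) ^ (n * (n - 1) / 2) := by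
  set L : Matrix (Fin n) (Fin n) R :=
    Matrix.of fun i k : Fin n => ((i : ℕ).choose k : R) * (lam + mu) ^ (k : ℕ) with hL
  set U : Matrix (Fin n) (Fin n) R :=
    Matrix.of fun k j : Fin n => ((j : ℕ).choose k : R) * lam ^ ((j : ℕ) - (k : ℕ)) with hU
  have hM : (Matrix.of fun i j : Fin n =>
        ∑ k ∈ Finset.range (min (i : ℕ) (j : ℕ) + 1),
          ((i : ℕ).choose k : R) * ((j : ℕ).choose k : R) *
            (lam + mu) ^ k * lam ^ ((j : ℕ) - k)) = L * U := by
    ext i j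
    simp only [Matrix.mul_apply, Matrix.of_apply, hL, hU]
    rw [Fin.sum_univ_eq_sum_range (fun k =>
      ((i : ℕ).choose k : R) * (lam + mu) ^ k * (((j : ℕ).choose k : R) * lam ^ ((j : ℕ) - k)))]
    rw [Finset.sum_subset (Finset.range_subset_range.2 (by omega : min (i : ℕ) (j : ℕ) + 1 ≤ n))]
    · exact Finset.sum_congr rfl fun k _ => by ring
    · intro k _ hk
      simp only [Finset.mem_range, not_lt] at hk
      rcases Nat.lt_or_ge (i : ℕ) k with h | h
      · simp [Nat.choose_eq_zero_of_lt h]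
      · have : (j : ℕ) < k := by omega
        simp [Nat.choose_eq_zero_of_lt this]
  rw [hM, Matrix.det_mul]
  have hLd : L.det = (lam + mu) ^ (n * (n - 1) / 2) := by
    rw [Matrix.det_of_lowerTriangular L (by
      intro a b hab
      simp only [hL, Matrix.of_apply]
      simp [Nat.choose_eq_zero_of_lt (show (a : ℕ) < b from hab)])]
    simp only [hL, Matrix.of_apply, Nat.choose_self, Nat.cast_one, one_mul]
    rw [Finset.prod_pow_eq_pow_sum]
    congr 1
    rw [Fin.sum_univ_eq_sum_range (fun i => i), Finset.sum_range_id]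
  have hUd : U.det = 1 := by
    rw [Matrix.det_of_upperTriangular (by
      intro a b hab
      simp only [hU, Matrix.of_apply]
      simp [Nat.choose_eq_zero_of_lt (show (b : ℕ) < a from hab)])]
    simp [hU]
  rw [hLd, hUd, mul_one]
end

section
/- Let λ₀, μ₀ ∈ F, set λ(a) = λ₀ and μ(a) = μ₀ for all a ∈ ℤ, and let A be the n×n matrix with all entries equal to 1. If T is a solution of the inhomogeneous T-system for (A, λ, μ) up to level n, then T(0,0,n) = (λ₀ + μ₀)^{n(n−1)/2}. -/
private def triNum : ℕ → ℕ
  | 0 => 0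
  | (k+1) => triNum k + k

private lemma two_mul_triNum (k : ℕ) : 2 * triNum (k+1) = (k+1) * k := by
  induction k with
  | zero => rfl
  | succ t ih =>
    have : triNum (t+2) = triNum (t+1) + (t+1) := rfl
    rw [this, Nat.mul_add, ih]; ring

private lemma triNum_eq (k : ℕ) : triNum k = k * (k-1) / 2 := by
  cases k with
  | zero => rfl
  | succ t =>
    have h := two_mul_triNum t
    rw [Nat.succ_sub_one, ← h, Nat.mul_div_cancel_left _ (by norm_num)]

private lemma key_lemma {F : Type*} [Field F] (n : ℕ) (lam0 mu0 : F)
    (T : ℤ → ℤ → ℕ → F)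
    (hT : IsTSystemSolution n (Matrix.of fun _ _ : Fin n => (1 : F))
      (fun _ => lam0) (fun _ => mu0) T) :
    ∀ k : ℕ, ∀ i j : ℤ, (i + j + (k : ℤ)) % 2 = (n : ℤ) % 2 →
      |i| + |j| + (k : ℤ) ≤ (n : ℤ) → T i j k = (lam0 + mu0) ^ triNum k := by
  intro k
  induction k using Nat.strong_induction_on with
  | _ k ih =>
    match k with
    | 0 =>
      intro i j hp hb
      simp only [Int.abs_eq_natAbs] at hb
      push_cast at hp
      rw [hT.1 i j (by omega) (by simp only [Int.abs_eq_natAbs]; omega)]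
      simp [triNum]
    | 1 =>
      intro i j hp hb
      simp only [Int.abs_eq_natAbs] at hb
      push_cast at hp
      have hr0 : (0:ℤ) ≤ (j - i + n + 1)/2 - 1 := by omega
      have hc0 : (0:ℤ) ≤ (i + j + n + 1)/2 - 1 := by omega
      have hrn : ((j - i + n + 1)/2 - 1).toNat < n := by omega
      have hcn : ((i + j + n + 1)/2 - 1).toNat < n := by omega
      have h := hT.2.1 i j ⟨_, hrn⟩ ⟨_, hcn⟩ (by omega)
        (by simp only [Int.abs_eq_natAbs]; omega)
        (by push_cast [Int.toNat_of_nonneg hr0]; omega)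
        (by push_cast [Int.toNat_of_nonneg hc0]; omega)
      rw [h]
      simp [triNum]
    | (m+2) =>
      intro i j hp hb
      simp only [Int.abs_eq_natAbs] at hb
      push_cast at hp
      have hm0 : T i j m = (lam0 + mu0) ^ triNum m := by
        apply ih m (by omega) i j (by push_cast; omega)
        simp only [Int.abs_eq_natAbs]; omega
      have habs : ∀ a b : ℤ, a.natAbs ≤ b.natAbs + 1 ∨ True := fun _ _ => Or.inr trivial
      have hj1 : T i (j+1) (m+1) = (lam0 + mu0) ^ triNum (m+1) := by
        apply ih (m+1) (by omega) i (j+1) (by push_cast; omega)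
        simp only [Int.abs_eq_natAbs]; omega
      have hj2 : T i (j-1) (m+1) = (lam0 + mu0) ^ triNum (m+1) := by
        apply ih (m+1) (by omega) i (j-1) (by push_cast; omega)
        simp only [Int.abs_eq_natAbs]; omega
      have hi1 : T (i+1) j (m+1) = (lam0 + mu0) ^ triNum (m+1) := by
        apply ih (m+1) (by omega) (i+1) j (by push_cast; omega)
        simp only [Int.abs_eq_natAbs]; omega
      have hi2 : T (i-1) j (m+1) = (lam0 + mu0) ^ triNum (m+1) := by
        apply ih (m+1) (by omega) (i-1) j (by push_cast; omega)
        simp only [Int.abs_eq_natAbs]; omega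
      have hnz : T i j m ≠ 0 := by
        apply hT.2.2.2 i j m (by push_cast; omega)
        simp only [Int.abs_eq_natAbs]; omega
      have hrec := hT.2.2.1 i j (m+1) (by omega) (by push_cast; omega)
        (by simp only [Int.abs_eq_natAbs]; omega)
      have hidx : m + 1 - 1 = m := rfl
      rw [hidx, hm0, hj1, hj2, hi1, hi2] at hrec
      rw [hm0] at hnz
      apply mul_right_cancel₀ hnz
      rw [hrec]
      have hg : triNum (m+2) + triNum m = triNum (m+1) + triNum (m+1) + 1 := by
        have h2 : triNum (m+2) = triNum (m+1) + (m+1) := rfl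
        have h1 : triNum (m+1) = triNum m + m := rfl
        omega
      rw [← pow_add, hg, pow_add, pow_add, pow_one]
      ring

/-- The homogeneous Lambda-determinant of the all-ones matrix. -/
theorem lambda_determinant_all_ones_homogeneous
    {F : Type*} [Field F] (n : ℕ) (hn : 1 ≤ n) (lam0 mu0 : F)
    (T : ℤ → ℤ → ℕ → F)
    (hT : IsTSystemSolution n (Matrix.of fun _ _ : Fin n => (1 : F))
      (fun _ => lam0) (fun _ => mu0) T) :
    T 0 0 n = (lam0 + mu0) ^ (n * (n - 1) / 2) := by
  rw [← triNum_eq]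
  exact key_lemma n lam0 mu0 T hT n 0 0 (by simp) (by simp)
end
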